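/- arXiv:math/0210002 — 4 statements merged into one kernel-verified Lean document; each statement's English description precedes it below -/
import Mathlib

section
/- Let (R, m) be a commutative Noetherian local ring and M a finitely generated R-module with dim M ≤ 1. Then for any element x ∈ m and any R-submodule N of M, ℓ(N/xN) ≤ ℓ(M/xM), where lengths may be infinite. -/
open Pointwise

/-- The length `ℓ(M)` of an `R`-module `M` (possibly infinite), defined as the supremum of the
lengths of strictly increasing chains of submodules of `M`. -/
noncomputable def moduleLength (R M : Type*) [CommRing R] [AddCommGroup M] [Module R M] : ℕ∞ :=
  ⨆ s : LTSeries (Submodule R M), (s.length : ℕ∞)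

namespace AuxLen

/-- The length of a preorder: supremum of lengths of strictly increasing series. -/
noncomputable def eLen (α : Type*) [Preorder α] : ℕ∞ := ⨆ s : LTSeries α, (s.length : ℕ∞)

lemma eLen_le_of_strictMono {α β : Type*} [Preorder α] [Preorder β] (f : α → β)
    (hf : StrictMono f) : eLen α ≤ eLen β :=
  iSup_le fun s => le_iSup_of_le (s.map f hf) (by simp [LTSeries.map])

lemma eLen_eq_of_orderIso {α β : Type*} [Preorder α] [Preorder β] (f : α ≃o β) :
    eLen α = eLen β :=
  le_antisymm (eLen_le_of_strictMono f f.strictMono)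
    (eLen_le_of_strictMono f.symm f.symm.strictMono)

lemma eLen_eq_zero_of_subsingleton {α : Type*} [Preorder α] [Subsingleton α] : eLen α = 0 := by
  refine le_antisymm (iSup_le fun s => ?_) (by simp)
  rcases Nat.eq_zero_or_pos s.length with h | h
  · simp [h]
  · have h2 : s.toFun ⟨0, by omega⟩ < s.toFun ⟨1, by omega⟩ :=
      s.strictMono (by simp [Fin.lt_def])
    rw [Subsingleton.elim (s.toFun ⟨0, by omega⟩) (s.toFun ⟨1, by omega⟩)] at h2
    exact absurd h2 (lt_irrefl _)


lemma length_snoc {β : Type*} {r : SetRel β β} (p : RelSeries r) (y : β) (h : (p.last, y) ∈ r) :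
    (p.snoc y h).length = p.length + 1 := rfl

lemma length_cons {β : Type*} {r : SetRel β β} (p : RelSeries r) (y : β) (h : (y, p.head) ∈ r) :
    (p.cons y h).length = p.length + 1 := by
  show 0 + p.length + 1 = p.length + 1
  omega

lemma length_map {α β : Type*} [Preorder α] [Preorder β] (p : LTSeries α) (f : α → β)
    (hf : StrictMono f) : (p.map f hf).length = p.length := rfl

section Lattice

variable {α : Type*} [Lattice α]

lemma exists_pair [IsModularLattice α] (a : α) (s : LTSeries α) :
    ∃ (u : LTSeries (Set.Iic a)) (v : LTSeries (Set.Ici a)),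
      s.length ≤ u.length + v.length ∧ (u.last : α) = s.last ⊓ a ∧ (v.last : α) = s.last ⊔ a := by
  suffices H : ∀ (n : ℕ) (s : LTSeries α), s.length = n → ∃ (u : LTSeries (Set.Iic a))
      (v : LTSeries (Set.Ici a)), s.length ≤ u.length + v.length ∧
      (u.last : α) = s.last ⊓ a ∧ (v.last : α) = s.last ⊔ a by
    exact H s.length s rfl
  intro n
  induction n with
  | zero =>
      intro s hn
      exact ⟨RelSeries.singleton _ ⟨s.last ⊓ a, inf_le_right⟩,
        RelSeries.singleton _ ⟨s.last ⊔ a, le_sup_right⟩, by simp [hn], by simp [RelSeries.last_singleton],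
        by simp [RelSeries.last_singleton]⟩
  | succ n ih =>
      intro s hn
      have hne : s.length ≠ 0 := by omega
      have hlt : s.eraseLast.last < s.last := s.eraseLast_last_rel_last hne
      obtain ⟨u, v, hlen, hu, hv⟩ := ih s.eraseLast (by simp [RelSeries.eraseLast, hn])
      rcases lt_or_eq_of_le (inf_le_inf_right a hlt.le) with hi | hi
      · rcases lt_or_eq_of_le (sup_le_sup_right hlt.le a) with hs | hs
        · refine ⟨u.snoc ⟨s.last ⊓ a, Set.mem_Iic.2 inf_le_right⟩ (by change (_ : Set.Iic a) < _; rw [← Subtype.coe_lt_coe, hu]; exact hi),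
            v.snoc ⟨s.last ⊔ a, Set.mem_Ici.2 le_sup_right⟩ (by change (_ : Set.Ici a) < _; rw [← Subtype.coe_lt_coe, hv]; exact hs),
            ?_, by simp, by simp⟩
          simp only [length_snoc]
          have : s.eraseLast.length = s.length - 1 := rfl
          omega
        · refine ⟨u.snoc ⟨s.last ⊓ a, Set.mem_Iic.2 inf_le_right⟩ (by change (_ : Set.Iic a) < _; rw [← Subtype.coe_lt_coe, hu]; exact hi),
            v, ?_, by simp, by rw [hv, hs]⟩
          simp only [length_snoc]
          have : s.eraseLast.length = s.length - 1 := rfl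
          omega
      · have hs : s.eraseLast.last ⊔ a < s.last ⊔ a :=
          sup_lt_sup_of_lt_of_inf_le_inf hlt (le_of_eq hi.symm)
        refine ⟨u, v.snoc ⟨s.last ⊔ a, Set.mem_Ici.2 le_sup_right⟩ (by change (_ : Set.Ici a) < _; rw [← Subtype.coe_lt_coe, hv]; exact hs),
          ?_, by rw [hu, hi], by simp⟩
        simp only [length_snoc]
        have : s.eraseLast.length = s.length - 1 := rfl
        omega

lemma eLen_le_add [IsModularLattice α] (a : α) :
    eLen α ≤ eLen (Set.Iic a) + eLen (Set.Ici a) := by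
  refine iSup_le fun s => ?_
  obtain ⟨u, v, h, -, -⟩ := exists_pair a s
  calc (s.length : ℕ∞) ≤ (u.length : ℕ∞) + (v.length : ℕ∞) := by exact_mod_cast h
    _ ≤ _ := add_le_add (le_iSup (fun t : LTSeries (Set.Iic a) => (t.length : ℕ∞)) u)
        (le_iSup (fun t : LTSeries (Set.Ici a) => (t.length : ℕ∞)) v)

lemma exists_last_eq (a : α) (u : LTSeries (Set.Iic a)) :
    ∃ p : LTSeries α, p.last = a ∧ u.length ≤ p.length := by
  have hle : (u.last : α) ≤ a := u.last.2
  rcases lt_or_eq_of_le hle with h | h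
  · refine ⟨(u.map _ (Subtype.strictMono_coe _)).snoc a (by simpa using h), by simp, ?_⟩
    rw [length_snoc, length_map]
    omega
  · exact ⟨u.map _ (Subtype.strictMono_coe _), by simpa using h, le_refl _⟩

lemma exists_head_eq (a : α) (v : LTSeries (Set.Ici a)) :
    ∃ q : LTSeries α, q.head = a ∧ v.length ≤ q.length := by
  have hle : a ≤ (v.head : α) := v.head.2
  rcases lt_or_eq_of_le hle with h | h
  · refine ⟨(v.map _ (Subtype.strictMono_coe _)).cons a (by simpa using h), by simp, ?_⟩
    rw [length_cons, length_map]
    omega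
  · exact ⟨v.map _ (Subtype.strictMono_coe _), by simp [h.symm], le_refl _⟩

lemma add_eLen_le (a : α) : eLen (Set.Iic a) + eLen (Set.Ici a) ≤ eLen α := by
  have h1 : Nonempty (Set.Iic a) := ⟨⟨a, le_refl a⟩⟩
  have h2 : Nonempty (Set.Ici a) := ⟨⟨a, le_refl a⟩⟩
  rw [eLen, eLen, ENat.iSup_add]
  refine iSup_le fun u => ?_
  rw [ENat.add_iSup]
  refine iSup_le fun v => ?_
  obtain ⟨p, hp, hpu⟩ := exists_last_eq a u
  obtain ⟨q, hq, hqv⟩ := exists_head_eq a v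
  refine le_iSup_of_le (p.smash q (by rw [hp, hq])) ?_
  have : (p.smash q (by rw [hp, hq])).length = p.length + q.length := rfl
  rw [this]
  exact_mod_cast Nat.add_le_add hpu hqv

lemma eLen_eq_add (a : α) [IsModularLattice α] :
    eLen α = eLen (Set.Iic a) + eLen (Set.Ici a) :=
  le_antisymm (eLen_le_add a) (add_eLen_le a)

end Lattice
end AuxLen

namespace AuxLen

section Modules

variable {R : Type*} [CommRing R]

lemma moduleLength_def (M : Type*) [AddCommGroup M] [Module R M] :
    moduleLength R M = eLen (Submodule R M) := rfl

variable {M P : Type*} [AddCommGroup M] [Module R M] [AddCommGroup P] [Module R P]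

lemma mlen_le_of_injective (f : M →ₗ[R] P) (hf : Function.Injective f) :
    moduleLength R M ≤ moduleLength R P :=
  eLen_le_of_strictMono (Submodule.map f)
    (fun p q h => lt_of_le_of_ne (Submodule.map_mono h.le)
      (fun e => h.ne <| by
        rw [← Submodule.comap_map_eq_of_injective hf p, e,
          Submodule.comap_map_eq_of_injective hf q]))

lemma mlen_le_of_surjective (f : M →ₗ[R] P) (hf : Function.Surjective f) :
    moduleLength R P ≤ moduleLength R M :=
  eLen_le_of_strictMono (Submodule.comap f)
    (fun p q h => lt_of_le_of_ne (Submodule.comap_mono h.le)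
      (fun e => h.ne <| by
        rw [← Submodule.map_comap_eq_of_surjective hf p, e,
          Submodule.map_comap_eq_of_surjective hf q]))

lemma mlen_eq_of_equiv (e : M ≃ₗ[R] P) : moduleLength R M = moduleLength R P :=
  le_antisymm (mlen_le_of_injective e.toLinearMap e.injective)
    (mlen_le_of_injective e.symm.toLinearMap e.symm.injective)

lemma mlen_submodule_le (A : Submodule R M) : moduleLength R A ≤ moduleLength R M :=
  mlen_le_of_injective A.subtype A.injective_subtype

lemma mlen_mono {A B : Submodule R M} (h : A ≤ B) : moduleLength R A ≤ moduleLength R B :=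
  mlen_le_of_injective (Submodule.inclusion h) (Submodule.inclusion_injective h)

lemma mlen_quot_le (A : Submodule R M) : moduleLength R (M ⧸ A) ≤ moduleLength R M :=
  mlen_le_of_surjective A.mkQ A.mkQ_surjective

lemma mlen_quot_mono {A B : Submodule R M} (h : A ≤ B) :
    moduleLength R (M ⧸ B) ≤ moduleLength R (M ⧸ A) := by
  refine mlen_le_of_surjective (Submodule.mapQ A B LinearMap.id h) ?_
  intro b
  obtain ⟨m, rfl⟩ := B.mkQ_surjective b
  exact ⟨A.mkQ m, by simp [Submodule.mapQ_apply]⟩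

/-- Additivity of module length. -/
lemma mlen_add (A : Submodule R M) :
    moduleLength R M = moduleLength R A + moduleLength R (M ⧸ A) := by
  have e1 : moduleLength R A = eLen (Set.Iic A) :=
    eLen_eq_of_orderIso (Submodule.mapIic A)
  have e2 : moduleLength R (M ⧸ A) = eLen (Set.Ici A) :=
    eLen_eq_of_orderIso (Submodule.comapMkQRelIso A)
  rw [moduleLength_def, e1, e2]
  exact eLen_eq_add A

lemma mlen_add' {A B : Submodule R M} (h : B ≤ A) :
    moduleLength R A = moduleLength R B + moduleLength R (↥A ⧸ B.comap A.subtype) := by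
  rw [mlen_add (B.comap A.subtype)]
  congr 1
  exact mlen_eq_of_equiv (Submodule.comapSubtypeEquivOfLe h)

end Modules
end AuxLen

namespace AuxLen

section Smul

variable {R : Type*} [CommRing R] {M : Type*} [AddCommGroup M] [Module R M]

lemma mem_psmul {x : R} {S : Submodule R M} {m : M} : m ∈ x • S ↔ ∃ s ∈ S, x • s = m := by
  rw [← SetLike.mem_coe, Submodule.coe_pointwise_smul]
  exact Set.mem_smul_set

lemma psmul_le_self (x : R) (S : Submodule R M) : x • S ≤ S := by
  intro m hm
  obtain ⟨s, hs, rfl⟩ := mem_psmul.1 hm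
  exact S.smul_mem x hs

lemma psmul_top_eq_range (x : R) :
    (x • ⊤ : Submodule R M) = LinearMap.range (LinearMap.lsmul R M x) := by
  ext m
  simp only [mem_psmul, LinearMap.mem_range, LinearMap.lsmul_apply]
  exact ⟨fun ⟨s, _, h⟩ => ⟨s, h⟩, fun ⟨s, h⟩ => ⟨s, trivial, h⟩⟩

lemma comap_subtype_psmul (x : R) (G : Submodule R M) :
    (x • G).comap G.subtype = (x • ⊤ : Submodule R ↥G) := by
  ext g
  simp only [Submodule.mem_comap, Submodule.subtype_apply, mem_psmul]
  constructor
  · rintro ⟨s, hs, hxs⟩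
    exact ⟨⟨s, hs⟩, trivial, Subtype.ext hxs⟩
  · rintro ⟨s, -, rfl⟩
    exact ⟨(s : M), s.2, rfl⟩

/-- Finiteness by dévissage: if `x^n` kills `G` and `G/xG` has finite length,
then `G` has finite length. -/
lemma mlen_ne_top_of_nilpotent (x : R) : ∀ (n : ℕ) (G : Submodule R M), x ^ n • G = ⊥ →
    moduleLength R (↥G ⧸ (x • ⊤ : Submodule R ↥G)) ≠ ⊤ → moduleLength R G ≠ ⊤ := by
  intro n
  induction n with
  | zero =>
      intro G hG _
      rw [pow_zero, one_smul] at hG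
      subst hG
      have : Subsingleton (Submodule R (↥(⊥ : Submodule R M))) := by
        constructor
        intro p q
        have hs : Subsingleton (↥(⊥ : Submodule R M)) := by
          constructor
          rintro ⟨a, ha⟩ ⟨b, hb⟩
          simp only [Submodule.mem_bot] at ha hb
          simp [ha, hb]
        exact Subsingleton.elim p q
      rw [moduleLength_def, eLen_eq_zero_of_subsingleton]
      simp
  | succ n ih =>
      intro G hG hq
      have hxG : x • G ≤ G := psmul_le_self x G
      have h1 : moduleLength R G = moduleLength R ↥(x • G) +
          moduleLength R (↥G ⧸ (x • ⊤ : Submodule R ↥G)) := by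
        rw [mlen_add' hxG, comap_subtype_psmul]
      -- the quotient of `xG` is a quotient of the quotient of `G`
      have hres : ∀ m ∈ G, LinearMap.lsmul R M x m ∈ x • G :=
        fun m hm => Submodule.smul_mem_pointwise_smul m x G hm
      set τ : ↥G →ₗ[R] (↥(x • G) ⧸ (x • ⊤ : Submodule R ↥(x • G))) :=
        (x • ⊤ : Submodule R ↥(x • G)).mkQ ∘ₗ ((LinearMap.lsmul R M x).restrict hres) with hτ
      have hkerτ : (x • ⊤ : Submodule R ↥G) ≤ LinearMap.ker τ := by
        rintro g hg
        obtain ⟨g', -, rfl⟩ := mem_psmul.1 hg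
        rw [LinearMap.mem_ker, map_smul]
        have : τ g' = Submodule.Quotient.mk ((LinearMap.lsmul R M x).restrict hres g') := rfl
        rw [this, ← Submodule.Quotient.mk_smul, Submodule.Quotient.mk_eq_zero]
        exact Submodule.smul_mem_pointwise_smul _ x ⊤ trivial
      have hsurj : Function.Surjective
          (Submodule.liftQ (x • ⊤ : Submodule R ↥G) τ hkerτ) := by
        intro w
        obtain ⟨⟨u, hu⟩, rfl⟩ := Submodule.Quotient.mk_surjective _ w
        obtain ⟨s, hs, rfl⟩ := mem_psmul.1 hu
        refine ⟨Submodule.Quotient.mk ⟨s, hs⟩, ?_⟩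
        rw [Submodule.liftQ_apply]
        have : τ ⟨s, hs⟩ = Submodule.Quotient.mk ((LinearMap.lsmul R M x).restrict hres ⟨s, hs⟩) := rfl
        rw [this]
        congr 1
      have h2 : moduleLength R (↥(x • G) ⧸ (x • ⊤ : Submodule R ↥(x • G))) ≤
          moduleLength R (↥G ⧸ (x • ⊤ : Submodule R ↥G)) :=
        mlen_le_of_surjective _ hsurj
      have h3 : moduleLength R ↥(x • G) ≠ ⊤ := by
        refine ih (x • G) ?_ (fun h => hq (top_le_iff.1 (h ▸ h2)))
        rw [smul_smul, ← pow_succ]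
        exact hG
      rw [h1]
      exact WithTop.add_ne_top.2 ⟨h3, hq⟩

end Smul
end AuxLen

namespace AuxLen

section Key

variable {R : Type*} [CommRing R]

/-- **Key lemma**: over a Noetherian module `K`, `ℓ(0 :_K x) ≤ ℓ(K/xK)`. -/
lemma key (K : Type*) [AddCommGroup K] [Module R K] [IsNoetherian R K] (x : R) :
    moduleLength R (LinearMap.ker (LinearMap.lsmul R K x)) ≤
      moduleLength R (K ⧸ (x • ⊤ : Submodule R K)) := by
  by_cases hC : moduleLength R (K ⧸ (x • ⊤ : Submodule R K)) = ⊤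
  · rw [hC]; exact le_top
  -- the chain of kernels of powers of `x` stabilizes
  have hmono : Monotone (fun n : ℕ => LinearMap.ker (LinearMap.lsmul R K (x ^ n))) := by
    intro n m h k hk
    rw [LinearMap.mem_ker, LinearMap.lsmul_apply] at hk ⊢
    have hxm : x ^ m = x ^ (m - n) * x ^ n := by rw [← pow_add, Nat.sub_add_cancel h]
    rw [hxm, mul_smul, hk, smul_zero]
  obtain ⟨c, hc⟩ := monotone_stabilizes_iff_noetherian.mpr inferInstance
    ⟨fun n : ℕ => LinearMap.ker (LinearMap.lsmul R K (x ^ n)), hmono⟩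
  set F : Submodule R K := LinearMap.ker (LinearMap.lsmul R K (x ^ (c + 1))) with hF
  have hmem : ∀ k : K, k ∈ F ↔ x ^ (c + 1) • k = 0 := by
    intro k; rw [hF, LinearMap.mem_ker, LinearMap.lsmul_apply]
  have hstab : ∀ m : ℕ, c ≤ m →
      LinearMap.ker (LinearMap.lsmul R K (x ^ m)) = F := by
    intro m hm
    have h1 := hc m hm
    have h2 := hc (c + 1) (by omega)
    exact h1.symm.trans h2
  have hker1 : LinearMap.ker (LinearMap.lsmul R K x) ≤ F := by
    intro k hk
    rw [LinearMap.mem_ker, LinearMap.lsmul_apply] at hk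
    rw [hmem, pow_succ, mul_smul, hk, smul_zero]
  -- `F ⊓ xK = xF`
  have hFinf : F ⊓ (x • ⊤ : Submodule R K) = x • F := by
    apply le_antisymm
    · intro u hu
      rw [Submodule.mem_inf] at hu
      obtain ⟨hu1, hu2⟩ := hu
      obtain ⟨v, -, rfl⟩ := mem_psmul.1 hu2
      have hv : v ∈ F := by
        have : v ∈ LinearMap.ker (LinearMap.lsmul R K (x ^ (c + 2))) := by
          rw [LinearMap.mem_ker, LinearMap.lsmul_apply, pow_succ, mul_smul]
          rw [hmem] at hu1
          exact hu1
        rwa [hstab (c + 2) (by omega)] at this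
      exact Submodule.smul_mem_pointwise_smul v x F hv
    · intro u hu
      obtain ⟨v, hv, rfl⟩ := mem_psmul.1 hu
      rw [Submodule.mem_inf]
      refine ⟨?_, Submodule.smul_mem_pointwise_smul v x ⊤ trivial⟩
      rw [hmem] at hv ⊢
      rw [smul_comm, hv, smul_zero]
  have hnil : x ^ (c + 1) • F = ⊥ := by
    rw [eq_bot_iff]
    intro u hu
    obtain ⟨v, hv, rfl⟩ := mem_psmul.1 hu
    rw [hmem] at hv
    simp [hv]
  -- `F/xF` embeds in `K/xK`
  set ψ : ↥F →ₗ[R] K ⧸ (x • ⊤ : Submodule R K) := (x • ⊤ : Submodule R K).mkQ ∘ₗ F.subtype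
    with hψ
  have hkerψ : LinearMap.ker ψ = (x • ⊤ : Submodule R ↥F) := by
    rw [hψ, LinearMap.ker_comp, Submodule.ker_mkQ]
    have h1 : (x • ⊤ : Submodule R K).comap F.subtype
        = (F ⊓ (x • ⊤ : Submodule R K)).comap F.subtype := by
      rw [Submodule.comap_inf, Submodule.comap_subtype_self, top_inf_eq]
    rw [h1, hFinf, comap_subtype_psmul]
  have hq : moduleLength R (↥F ⧸ (x • ⊤ : Submodule R ↥F)) ≤
      moduleLength R (K ⧸ (x • ⊤ : Submodule R K)) := by
    rw [← hkerψ]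
    calc moduleLength R (↥F ⧸ LinearMap.ker ψ)
        = moduleLength R (LinearMap.range ψ) :=
          mlen_eq_of_equiv (LinearMap.quotKerEquivRange ψ)
      _ ≤ _ := mlen_submodule_le _
  have hFfin : moduleLength R F ≠ ⊤ :=
    mlen_ne_top_of_nilpotent x (c + 1) F hnil (fun h => hC (top_le_iff.1 (h ▸ hq)))
  -- Herbrand: `ℓ(ker(x) on F) = ℓ(F/xF)`
  have e1 : moduleLength R F = moduleLength R (LinearMap.ker (LinearMap.lsmul R (↥F) x)) +
      moduleLength R (↥F ⧸ LinearMap.ker (LinearMap.lsmul R (↥F) x)) := mlen_add _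
  have e2 : moduleLength R (↥F ⧸ LinearMap.ker (LinearMap.lsmul R (↥F) x)) =
      moduleLength R (x • ⊤ : Submodule R ↥F) := by
    rw [psmul_top_eq_range]
    exact mlen_eq_of_equiv (LinearMap.quotKerEquivRange (LinearMap.lsmul R (↥F) x))
  have e3 : moduleLength R F = moduleLength R (x • ⊤ : Submodule R ↥F) +
      moduleLength R (↥F ⧸ (x • ⊤ : Submodule R ↥F)) := mlen_add _
  have hxt : moduleLength R (x • ⊤ : Submodule R ↥F) ≠ ⊤ :=
    fun h => hFfin (top_le_iff.1 (h ▸ mlen_submodule_le _))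
  have hcancel : moduleLength R (LinearMap.ker (LinearMap.lsmul R (↥F) x)) =
      moduleLength R (↥F ⧸ (x • ⊤ : Submodule R ↥F)) := by
    have h' : moduleLength R (x • ⊤ : Submodule R ↥F) +
        moduleLength R (LinearMap.ker (LinearMap.lsmul R (↥F) x)) =
        moduleLength R (x • ⊤ : Submodule R ↥F) +
        moduleLength R (↥F ⧸ (x • ⊤ : Submodule R ↥F)) := by
      calc moduleLength R (x • ⊤ : Submodule R ↥F) +
            moduleLength R (LinearMap.ker (LinearMap.lsmul R (↥F) x))
          = moduleLength R (LinearMap.ker (LinearMap.lsmul R (↥F) x)) +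
            moduleLength R (x • ⊤ : Submodule R ↥F) := add_comm _ _
        _ = moduleLength R (LinearMap.ker (LinearMap.lsmul R (↥F) x)) +
            moduleLength R (↥F ⧸ LinearMap.ker (LinearMap.lsmul R (↥F) x)) := by rw [e2]
        _ = moduleLength R F := e1.symm
        _ = _ := e3
    exact WithTop.add_left_cancel hxt h'
  -- the kernel of `x` on `K` equals the kernel of `x` on `F`
  have hker_eq : LinearMap.ker (LinearMap.lsmul R (↥F) x) =
      (LinearMap.ker (LinearMap.lsmul R K x)).comap F.subtype := by
    ext p
    simp only [LinearMap.mem_ker, LinearMap.lsmul_apply, Submodule.mem_comap,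
      Submodule.subtype_apply]
    rw [Subtype.ext_iff]
    rfl
  have hfinal : moduleLength R (LinearMap.ker (LinearMap.lsmul R K x)) =
      moduleLength R (LinearMap.ker (LinearMap.lsmul R (↥F) x)) := by
    rw [hker_eq]
    exact (mlen_eq_of_equiv (Submodule.comapSubtypeEquivOfLe hker1)).symm
  rw [hfinal, hcancel]
  exact hq

end Key
end AuxLen

namespace AuxLen

section MapSmul

variable {R : Type*} [CommRing R] {M P : Type*} [AddCommGroup M] [Module R M]
  [AddCommGroup P] [Module R P]

lemma map_psmul (f : M →ₗ[R] P) (x : R) (S : Submodule R M) :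
    (x • S).map f = x • S.map f := by
  ext p
  simp only [Submodule.mem_map, mem_psmul]
  constructor
  · rintro ⟨m, ⟨s, hs, rfl⟩, rfl⟩
    exact ⟨f s, ⟨s, hs, rfl⟩, (map_smul f x s).symm⟩
  · rintro ⟨q, ⟨s, hs, rfl⟩, rfl⟩
    exact ⟨x • s, ⟨s, hs, rfl⟩, map_smul f x s⟩

lemma map_mkQ_self_bot (N : Submodule R M) : N.map N.mkQ = ⊥ := by
  rw [eq_bot_iff]
  rintro _ ⟨n, hn, rfl⟩
  simp only [Submodule.mem_bot, Submodule.mkQ_apply, Submodule.Quotient.mk_eq_zero]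
  exact hn

end MapSmul
end AuxLen

open AuxLen in
theorem length_quotient_smul_le_of_dim_le_one'
    {R : Type*} [CommRing R] [IsNoetherianRing R]
    (M : Type*) [AddCommGroup M] [Module R M] [Module.Finite R M]
    (x : R) (N : Submodule R M) :
    moduleLength R (N ⧸ (x • ⊤ : Submodule R N)) ≤
      moduleLength R (M ⧸ (x • ⊤ : Submodule R M)) := by
  haveI : IsNoetherian R M := isNoetherian_of_isNoetherianRing_of_finite R M
  haveI : IsNoetherian R (M ⧸ N) := isNoetherian_quotient N
  set xM : Submodule R M := (x • ⊤ : Submodule R M) with hxM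
  -- the natural map `N/xN → M/xM`
  set f' : ↥N →ₗ[R] M ⧸ xM := xM.mkQ ∘ₗ N.subtype with hf'def
  have hf' : (x • ⊤ : Submodule R ↥N) ≤ LinearMap.ker f' := by
    intro n hn
    obtain ⟨n', -, rfl⟩ := mem_psmul.1 hn
    rw [LinearMap.mem_ker]
    show xM.mkQ ((x • n' : ↥N) : M) = 0
    rw [Submodule.mkQ_apply, Submodule.Quotient.mk_eq_zero]
    exact Submodule.smul_mem_pointwise_smul _ x ⊤ trivial
  set g : (↥N ⧸ (x • ⊤ : Submodule R ↥N)) →ₗ[R] M ⧸ xM :=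
    Submodule.liftQ _ f' hf' with hgdef
  -- step 1 and 2: ℓ(N/xN) = ℓ(ker g) + ℓ(range g)
  have step1 : moduleLength R (↥N ⧸ (x • ⊤ : Submodule R ↥N)) =
      moduleLength R (LinearMap.ker g) +
        moduleLength R (LinearMap.range g) := by
    rw [mlen_add (LinearMap.ker g)]
    congr 1
    exact mlen_eq_of_equiv (LinearMap.quotKerEquivRange g)
  -- step 3: ℓ(ker g) ≤ ℓ((M/N)/x(M/N))
  set T : Submodule R M := N.comap (LinearMap.lsmul R M x) with hT
  have hres2 : ∀ m ∈ T, (LinearMap.lsmul R M x) m ∈ N := fun m hm => hm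
  set ν : ↥T →ₗ[R] ↥N := (LinearMap.lsmul R M x).restrict hres2 with hν
  set μ : ↥T →ₗ[R] (↥N ⧸ (x • ⊤ : Submodule R ↥N)) :=
    (x • ⊤ : Submodule R ↥N).mkQ ∘ₗ ν with hμ
  have hrange : LinearMap.range μ = LinearMap.ker g := by
    ext a
    constructor
    · rintro ⟨t, rfl⟩
      rw [LinearMap.mem_ker]
      have h1 : μ t = Submodule.Quotient.mk (ν t) := rfl
      rw [h1, hgdef, Submodule.liftQ_apply]
      show xM.mkQ ((ν t : M)) = 0
      have h2 : (ν t : M) = x • (t : M) := rfl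
      rw [h2, Submodule.mkQ_apply, Submodule.Quotient.mk_eq_zero]
      exact Submodule.smul_mem_pointwise_smul _ x ⊤ trivial
    · intro ha
      obtain ⟨n, rfl⟩ := Submodule.Quotient.mk_surjective _ a
      rw [LinearMap.mem_ker, hgdef, Submodule.liftQ_apply] at ha
      have hn : (n : M) ∈ xM := by
        rwa [hf'def, LinearMap.comp_apply, Submodule.subtype_apply, Submodule.mkQ_apply,
          Submodule.Quotient.mk_eq_zero] at ha
      obtain ⟨m, -, hm⟩ := mem_psmul.1 hn
      have hmT : m ∈ T := by
        show (LinearMap.lsmul R M x) m ∈ N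
        rw [LinearMap.lsmul_apply, hm]
        exact n.2
      refine ⟨⟨m, hmT⟩, ?_⟩
      have h1 : μ ⟨m, hmT⟩ = Submodule.Quotient.mk (ν ⟨m, hmT⟩) := rfl
      rw [h1]
      congr 1
      exact Subtype.ext hm
  have hNT : N.comap T.subtype ≤ LinearMap.ker μ := by
    intro t ht
    rw [LinearMap.mem_ker]
    have h1 : μ t = Submodule.Quotient.mk (ν t) := rfl
    rw [h1, Submodule.Quotient.mk_eq_zero]
    have h2 : ν t = x • (⟨(t : M), ht⟩ : ↥N) := Subtype.ext rfl
    rw [h2]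
    exact Submodule.smul_mem_pointwise_smul _ x ⊤ trivial
  set ρ : ↥T →ₗ[R] (M ⧸ N) := N.mkQ ∘ₗ T.subtype with hρ
  have hkerρ : LinearMap.ker ρ = N.comap T.subtype := by
    rw [hρ, LinearMap.ker_comp, Submodule.ker_mkQ]
  have hrangeρ : LinearMap.range ρ ≤ LinearMap.ker (LinearMap.lsmul R (M ⧸ N) x) := by
    rintro _ ⟨t, rfl⟩
    rw [LinearMap.mem_ker, LinearMap.lsmul_apply]
    show x • (N.mkQ (t : M)) = 0
    rw [← map_smul, Submodule.mkQ_apply, Submodule.Quotient.mk_eq_zero]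
    exact t.2
  have step3 : moduleLength R (LinearMap.ker g) ≤
      moduleLength R ((M ⧸ N) ⧸ (x • ⊤ : Submodule R (M ⧸ N))) := by
    calc moduleLength R (LinearMap.ker g)
        = moduleLength R (LinearMap.range μ) := by rw [hrange]
      _ = moduleLength R (↥T ⧸ LinearMap.ker μ) :=
          (mlen_eq_of_equiv (LinearMap.quotKerEquivRange μ)).symm
      _ ≤ moduleLength R (↥T ⧸ N.comap T.subtype) := mlen_quot_mono hNT
      _ = moduleLength R (↥T ⧸ LinearMap.ker ρ) := by rw [hkerρ]
      _ = moduleLength R (LinearMap.range ρ) :=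
          mlen_eq_of_equiv (LinearMap.quotKerEquivRange ρ)
      _ ≤ moduleLength R (LinearMap.ker (LinearMap.lsmul R (M ⧸ N) x)) := mlen_mono hrangeρ
      _ ≤ _ := key (M ⧸ N) x
  -- step 4: ℓ((M/N)/x(M/N)) = ℓ((M/xM)/range g)
  set Q : Submodule R M := xM ⊔ N with hQ
  have hQmap1 : Q.map N.mkQ = (x • ⊤ : Submodule R (M ⧸ N)) := by
    rw [hQ, Submodule.map_sup, map_mkQ_self_bot, sup_bot_eq, hxM, map_psmul,
      Submodule.map_top, Submodule.range_mkQ]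
  have hrg : LinearMap.range g = N.map xM.mkQ := by
    rw [hgdef, Submodule.range_liftQ, hf'def, LinearMap.range_comp, Submodule.range_subtype]
  have hQmap2 : Q.map xM.mkQ = N.map xM.mkQ := by
    rw [hQ, Submodule.map_sup, map_mkQ_self_bot, bot_sup_eq]
  have step4 : moduleLength R ((M ⧸ N) ⧸ (x • ⊤ : Submodule R (M ⧸ N))) =
      moduleLength R ((M ⧸ xM) ⧸ LinearMap.range g) := by
    rw [← hQmap1, hrg, ← hQmap2]
    calc moduleLength R ((M ⧸ N) ⧸ Q.map N.mkQ)
        = moduleLength R (M ⧸ Q) :=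
          mlen_eq_of_equiv (Submodule.quotientQuotientEquivQuotient N Q le_sup_right)
      _ = moduleLength R ((M ⧸ xM) ⧸ Q.map xM.mkQ) :=
          (mlen_eq_of_equiv (Submodule.quotientQuotientEquivQuotient xM Q le_sup_left)).symm
  -- step 5: assemble
  have step5 : moduleLength R (M ⧸ xM) =
      moduleLength R (LinearMap.range g) +
        moduleLength R ((M ⧸ xM) ⧸ LinearMap.range g) := mlen_add _
  calc moduleLength R (↥N ⧸ (x • ⊤ : Submodule R ↥N))
      = moduleLength R (LinearMap.ker g) + moduleLength R (LinearMap.range g) := step1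
    _ ≤ moduleLength R ((M ⧸ N) ⧸ (x • ⊤ : Submodule R (M ⧸ N))) +
        moduleLength R (LinearMap.range g) := add_le_add_left step3 _
    _ = moduleLength R ((M ⧸ xM) ⧸ LinearMap.range g) +
        moduleLength R (LinearMap.range g) := by rw [step4]
    _ = moduleLength R (M ⧸ xM) := by rw [add_comm, ← step5]


/-- **Theorem 2.** Let `(R, m)` be a commutative Noetherian local ring and `M` a finitely
generated `R`-module with `dim M ≤ 1` (Krull dimension of `R ⧸ Ann M`).  Then for any `x ∈ m`
and any submodule `N` of `M` we have `ℓ(N/xN) ≤ ℓ(M/xM)`, where the lengths may be infinite. -/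
theorem length_quotient_smul_le_of_dim_le_one
    {R : Type*} [CommRing R] [IsNoetherianRing R] [IsLocalRing R]
    (M : Type*) [AddCommGroup M] [Module R M] [Module.Finite R M]
    (hdim : ringKrullDim (R ⧸ Module.annihilator R M) ≤ 1)
    (x : R) (hx : x ∈ IsLocalRing.maximalIdeal R) (N : Submodule R M) :
    moduleLength R (N ⧸ (x • ⊤ : Submodule R N)) ≤
      moduleLength R (M ⧸ (x • ⊤ : Submodule R M)) :=
  length_quotient_smul_le_of_dim_le_one' M x N
end

section
/- Let R be a commutative Noetherian local ring, M a finitely generated R-module, N a submodule of M with ℓ(M/N) finite and ℓ(M/xM) finite for some x ∈ R. Then ℓ(M/xM) − ℓ(N/xN) = ℓ((xN :_M x)/N); in particular ℓ(N/xN) ≤ ℓ(M/xM). -/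
open Pointwise

section LatLen

open Order

/-- Supremum of lengths of chains in a preorder. -/
noncomputable def latLen (α : Type*) [Preorder α] : ℕ∞ := ⨆ s : LTSeries α, (s.length : ℕ∞)

lemma latLen_le_of_strictMono {α β : Type*} [Preorder α] [Preorder β] {f : α → β}
    (hf : StrictMono f) : latLen α ≤ latLen β :=
  iSup_le fun s => le_iSup_of_le (s.map f hf) le_rfl

lemma latLen_orderIso {α β : Type*} [Preorder α] [Preorder β] (e : α ≃o β) :
    latLen α = latLen β :=
  le_antisymm (latLen_le_of_strictMono e.strictMono) (latLen_le_of_strictMono e.symm.strictMono)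

lemma height_le_latLen {α : Type*} [Preorder α] (a : α) : Order.height a ≤ latLen α := by
  rw [Order.height_eq_iSup_last_eq]
  exact iSup₂_le fun p _ => le_iSup_of_le p le_rfl

lemma height_add_one_le {α : Type*} [Preorder α] {a b : α} (h : a < b) :
    Order.height a + 1 ≤ Order.height b := by
  rw [Order.height_eq_iSup_last_eq a,
    ENat.biSup_add' ⟨RelSeries.singleton _ a, RelSeries.last_singleton a⟩]
  refine iSup₂_le fun p hp => ?_
  have := Order.length_le_height_last (p := p.snoc b (hp ▸ h))
  simpa using this

variable {α : Type*} [Lattice α] [IsModularLattice α]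

lemma ltseries_length_le_height_add (a : α) (p : LTSeries α) :
    (p.length : ℕ∞) ≤ Order.height (⟨p.last ⊓ a, inf_le_right⟩ : {b // b ≤ a})
      + Order.height (⟨p.last ⊔ a, le_sup_right⟩ : {b // a ≤ b}) := by
  generalize hl : p.length = n
  induction n generalizing p with
  | zero => simp
  | succ n ih =>
    have h0 : p.length ≠ 0 := by omega
    have hel : p.eraseLast.length = n := by
      have : p.eraseLast.length = p.length - 1 := rfl
      omega
    have hlt : p.eraseLast.last < p.last := p.eraseLast_last_rel_last h0
    have IH := ih p.eraseLast hel
    have key := strictMono_inf_prod_sup (z := a) hlt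
    rw [Prod.lt_iff] at key
    have cast1 : ((n + 1 : ℕ) : ℕ∞) = (n : ℕ∞) + 1 := by push_cast; ring
    rcases key with ⟨h1, h2⟩ | ⟨h1, h2⟩
    · have e1 : Order.height (⟨p.eraseLast.last ⊓ a, inf_le_right⟩ : {b // b ≤ a}) + 1 ≤
          Order.height (⟨p.last ⊓ a, inf_le_right⟩ : {b // b ≤ a}) :=
        _root_.height_add_one_le (Subtype.mk_lt_mk.2 h1)
      have e2 : Order.height (⟨p.eraseLast.last ⊔ a, le_sup_right⟩ : {b // a ≤ b}) ≤
          Order.height (⟨p.last ⊔ a, le_sup_right⟩ : {b // a ≤ b}) :=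
        Order.height_mono (Subtype.mk_le_mk.2 h2)
      calc ((n + 1 : ℕ) : ℕ∞) = (n : ℕ∞) + 1 := cast1
        _ ≤ (Order.height (⟨p.eraseLast.last ⊓ a, inf_le_right⟩ : {b // b ≤ a})
              + Order.height (⟨p.eraseLast.last ⊔ a, le_sup_right⟩ : {b // a ≤ b})) + 1 :=
            add_le_add_left IH 1
        _ = (Order.height (⟨p.eraseLast.last ⊓ a, inf_le_right⟩ : {b // b ≤ a}) + 1)
              + Order.height (⟨p.eraseLast.last ⊔ a, le_sup_right⟩ : {b // a ≤ b}) := by ring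
        _ ≤ _ := add_le_add e1 e2
    · have e1 : Order.height (⟨p.eraseLast.last ⊓ a, inf_le_right⟩ : {b // b ≤ a}) ≤
          Order.height (⟨p.last ⊓ a, inf_le_right⟩ : {b // b ≤ a}) :=
        Order.height_mono (Subtype.mk_le_mk.2 h1)
      have e2 : Order.height (⟨p.eraseLast.last ⊔ a, le_sup_right⟩ : {b // a ≤ b}) + 1 ≤
          Order.height (⟨p.last ⊔ a, le_sup_right⟩ : {b // a ≤ b}) :=
        _root_.height_add_one_le (Subtype.mk_lt_mk.2 h2)
      calc ((n + 1 : ℕ) : ℕ∞) = (n : ℕ∞) + 1 := cast1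
        _ ≤ (Order.height (⟨p.eraseLast.last ⊓ a, inf_le_right⟩ : {b // b ≤ a})
              + Order.height (⟨p.eraseLast.last ⊔ a, le_sup_right⟩ : {b // a ≤ b})) + 1 :=
            add_le_add_left IH 1
        _ = Order.height (⟨p.eraseLast.last ⊓ a, inf_le_right⟩ : {b // b ≤ a})
              + (Order.height (⟨p.eraseLast.last ⊔ a, le_sup_right⟩ : {b // a ≤ b}) + 1) := by ring
        _ ≤ _ := add_le_add e1 e2

lemma latLen_split (a : α) :
    latLen α = latLen {b // b ≤ a} + latLen {b // a ≤ b} := by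
  refine le_antisymm ?_ ?_
  · refine iSup_le fun p => (ltseries_length_le_height_add a p).trans
      (add_le_add (height_le_latLen _) (height_le_latLen _))
  · have n1 : Nonempty (LTSeries {b // b ≤ a}) := ⟨RelSeries.singleton _ ⟨a, le_rfl⟩⟩
    have n2 : Nonempty (LTSeries {b // a ≤ b}) := ⟨RelSeries.singleton _ ⟨a, le_rfl⟩⟩
    unfold latLen
    rw [ENat.iSup_add]
    refine iSup_le fun p => ?_
    rw [ENat.add_iSup]
    refine iSup_le fun q => ?_
    obtain ⟨P, hP, hPl⟩ : ∃ P : LTSeries α, P.last = a ∧ p.length ≤ P.length := by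
      set p' := p.map Subtype.val (Subtype.strictMono_coe _) with hp'
      have hle : p'.last ≤ a := by rw [hp', LTSeries.last_map]; exact p.last.2
      rcases eq_or_lt_of_le hle with h | h
      · exact ⟨p', h, le_of_eq rfl⟩
      · refine ⟨p'.snoc a h, RelSeries.last_snoc _ _ _, ?_⟩
        have h1 : (p'.snoc a h).length = p'.length + 1 := by simp
        have h2 : p'.length = p.length := rfl
        omega
    obtain ⟨Q, hQ, hQl⟩ : ∃ Q : LTSeries α, Q.head = a ∧ q.length ≤ Q.length := by
      set q' := q.map Subtype.val (Subtype.strictMono_coe _) with hq'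
      have hle : a ≤ q'.head := by rw [hq', LTSeries.head_map]; exact q.head.2
      rcases eq_or_lt_of_le hle with h | h
      · exact ⟨q', h.symm, le_of_eq rfl⟩
      · refine ⟨q'.cons a h, RelSeries.head_cons _ _ _, ?_⟩
        have h1 : (q'.cons a h).length = q'.length + 1 := by simp
        have h2 : q'.length = q.length := rfl
        omega
    refine le_trans ?_ (le_iSup (fun s : LTSeries α => (s.length : ℕ∞))
      (P.smash Q (hP.trans hQ.symm)))
    have : (P.smash Q (hP.trans hQ.symm)).length = P.length + Q.length := rfl
    rw [this]
    push_cast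
    exact add_le_add (Nat.cast_le.2 hPl) (Nat.cast_le.2 hQl)

end LatLen

section ModuleLength

variable {R : Type*} [CommRing R] {M M₂ : Type*} [AddCommGroup M] [Module R M]
  [AddCommGroup M₂] [Module R M₂]

lemma moduleLength_def (R M : Type*) [CommRing R] [AddCommGroup M] [Module R M] :
    moduleLength R M = latLen (Submodule R M) := rfl

lemma moduleLength_congr (e : M ≃ₗ[R] M₂) : moduleLength R M = moduleLength R M₂ :=
  latLen_orderIso (Submodule.orderIsoMapComap e)

lemma moduleLength_add (N : Submodule R M) :
    moduleLength R M = moduleLength R N + moduleLength R (M ⧸ N) := by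
  rw [moduleLength_def, latLen_split N, moduleLength_def, moduleLength_def,
    latLen_orderIso (Submodule.MapSubtype.orderIso N),
    latLen_orderIso (Submodule.comapMkQRelIso N)]
  rfl

lemma moduleLength_map_mkQ (B A : Submodule R M) :
    moduleLength R (A.map B.mkQ) = moduleLength R (A ⧸ B.comap A.subtype) := by
  have h1 : LinearMap.ker (B.mkQ ∘ₗ A.subtype) = B.comap A.subtype := by
    rw [LinearMap.ker_comp, Submodule.ker_mkQ]
  have h2 : LinearMap.range (B.mkQ ∘ₗ A.subtype) = A.map B.mkQ := by
    rw [LinearMap.range_comp, Submodule.range_subtype]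
  calc moduleLength R (A.map B.mkQ)
      = moduleLength R (LinearMap.range (B.mkQ ∘ₗ A.subtype)) :=
        moduleLength_congr (LinearEquiv.ofEq _ _ h2.symm)
    _ = moduleLength R (A ⧸ LinearMap.ker (B.mkQ ∘ₗ A.subtype)) :=
        (moduleLength_congr (B.mkQ ∘ₗ A.subtype).quotKerEquivRange).symm
    _ = _ := moduleLength_congr (Submodule.quotEquivOfEq _ _ h1)

lemma moduleLength_quot_add {B A : Submodule R M} (h : B ≤ A) :
    moduleLength R (M ⧸ B) = moduleLength R (A.map B.mkQ) + moduleLength R (M ⧸ A) := by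
  rw [moduleLength_add (A.map B.mkQ)]
  congr 1
  exact moduleLength_congr (Submodule.quotientQuotientEquivQuotient B A h)

lemma smul_eq_map'' (x : R) (S : Submodule R M) :
    x • S = S.map (LinearMap.lsmul R M x) := by
  ext m
  constructor
  · rintro ⟨s, hs, rfl⟩
    exact ⟨s, hs, rfl⟩
  · rintro ⟨s, hs, rfl⟩
    exact ⟨s, hs, rfl⟩

end ModuleLength

/-- Let `R` be a commutative Noetherian local ring, `M` a finitely generated `R`-module, `N` a
submodule of `M` with `ℓ(M/N)` finite and `ℓ(M/xM)` finite for some `x ∈ R`.  Then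
`ℓ(M/xM) − ℓ(N/xN) = ℓ((xN :_M x)/N)`; in particular `ℓ(N/xN) ≤ ℓ(M/xM)`. -/
theorem length_quotient_smul_sub_eq_length_colon
    {R : Type*} [CommRing R] [IsNoetherianRing R] [IsLocalRing R]
    (M : Type*) [AddCommGroup M] [Module R M] [Module.Finite R M]
    (N : Submodule R M) (x : R)
    (hfinN : moduleLength R (M ⧸ N) ≠ ⊤)
    (hfinx : moduleLength R (M ⧸ (x • ⊤ : Submodule R M)) ≠ ⊤) :
    moduleLength R (M ⧸ (x • ⊤ : Submodule R M)) -
        moduleLength R (N ⧸ (x • ⊤ : Submodule R N)) =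
      moduleLength R
        (Submodule.comap (LinearMap.lsmul R M x) (x • N) ⧸
          Submodule.comap (Submodule.comap (LinearMap.lsmul R M x) (x • N)).subtype N) ∧
    moduleLength R (N ⧸ (x • ⊤ : Submodule R N)) ≤
      moduleLength R (M ⧸ (x • ⊤ : Submodule R M)) := by
  classical
  set K := Submodule.comap (LinearMap.lsmul R M x) (x • N) with hK
  have f1 : (x • N : Submodule R M) ≤ (x • ⊤ : Submodule R M) := by
    rw [smul_eq_map'', smul_eq_map'']; exact Submodule.map_mono le_top
  have f2 : (x • N : Submodule R M) ≤ N := by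
    rw [smul_eq_map'']
    exact Submodule.map_le_iff_le_comap.2 fun n hn => N.smul_mem x hn
  have f3 : N ≤ K := by
    intro n hn
    simp only [hK, Submodule.mem_comap, LinearMap.lsmul_apply]
    exact Submodule.smul_mem_pointwise_smul n x N hn
  set f := (x • N : Submodule R M).mkQ ∘ₗ LinearMap.lsmul R M x with hf
  have h4 : LinearMap.ker f = K := by rw [hf, LinearMap.ker_comp, Submodule.ker_mkQ]
  have h5 : LinearMap.range f
      = (x • ⊤ : Submodule R M).map (x • N : Submodule R M).mkQ := by
    rw [hf, LinearMap.range_comp, LinearMap.range_eq_map, ← smul_eq_map'']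
  have E4 : moduleLength R (M ⧸ K)
      = moduleLength R ((x • ⊤ : Submodule R M).map (x • N : Submodule R M).mkQ) :=
    calc moduleLength R (M ⧸ K)
        = moduleLength R (M ⧸ LinearMap.ker f) :=
          moduleLength_congr (Submodule.quotEquivOfEq _ _ h4.symm)
      _ = moduleLength R (LinearMap.range f) := moduleLength_congr f.quotKerEquivRange
      _ = _ := moduleLength_congr (LinearEquiv.ofEq _ _ h5)
  have hcomm : N.subtype ∘ₗ LinearMap.lsmul R N x = (LinearMap.lsmul R M x) ∘ₗ N.subtype := by
    ext n; rfl
  have hmapsub : Submodule.map N.subtype (x • (⊤ : Submodule R N)) = (x • N : Submodule R M) := by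
    rw [smul_eq_map'', smul_eq_map'', ← Submodule.map_comp, hcomm, Submodule.map_comp,
      Submodule.map_subtype_top]
  have hcomapsub : (x • N : Submodule R M).comap N.subtype = (x • ⊤ : Submodule R N) := by
    rw [← hmapsub, Submodule.comap_map_eq_of_injective N.injective_subtype]
  have E5 : moduleLength R (N ⧸ (x • ⊤ : Submodule R N))
      = moduleLength R (N.map (x • N : Submodule R M).mkQ) := by
    rw [moduleLength_map_mkQ (x • N : Submodule R M) N, hcomapsub]
  have E6 : moduleLength R (K ⧸ Submodule.comap K.subtype N)
      = moduleLength R (K.map N.mkQ) := by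
    rw [moduleLength_map_mkQ N K]
  have E1 := moduleLength_quot_add (R := R) f1
  have E2 := moduleLength_quot_add (R := R) f2
  have E3 := moduleLength_quot_add (R := R) f3
  set a := moduleLength R (M ⧸ (x • ⊤ : Submodule R M)) with ha
  set b := moduleLength R (N ⧸ (x • ⊤ : Submodule R N)) with hb
  set c := moduleLength R (K ⧸ Submodule.comap K.subtype N) with hc
  set d := moduleLength R (M ⧸ N) with hd
  set g := moduleLength R ((x • ⊤ : Submodule R M).map (x • N : Submodule R M).mkQ) with hg
  -- E1 : len (M ⧸ x•N) = g + a ; E2 : len (M ⧸ x•N) = b + d ; E3 : d = c + g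
  rw [← E5] at E2
  rw [← E6, E4] at E3
  have hgd : g ≤ d := by rw [E3]; exact le_add_self
  have hgtop : g ≠ ⊤ := ne_top_of_le_ne_top hfinN hgd
  have habc : a = b + c := by
    have : a + g = (b + c) + g := by
      rw [add_comm a g, ← E1, E2, E3]
      ring
    exact WithTop.add_right_cancel hgtop this
  have hbtop : b ≠ ⊤ := ne_top_of_le_ne_top hfinx (by rw [habc]; exact le_self_add)
  constructor
  · rw [habc]
    exact (ENat.addLECancellable_of_ne_top hbtop).add_tsub_cancel_left
  · rw [habc]; exact le_self_add
end

section
/- Let R be a commutative Noetherian local ring, M a finitely generated R-module, N a submodule of M, q an ideal of R, and x ∈ q an element that is a nonzerodivisor on M/N. If ℓ(N/qN) is finite, then ℓ((N + xM)/(qN + xM)) = ℓ(N/qN). -/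
open Pointwise

lemma moduleLength_le_of_equiv {R M M' : Type*} [CommRing R] [AddCommGroup M] [Module R M]
    [AddCommGroup M'] [Module R M'] (f : M ≃ₗ[R] M') :
    moduleLength R M ≤ moduleLength R M' := by
  refine iSup_le fun s => le_iSup_of_le (s.map (Submodule.orderIsoMapComap f)
    (Submodule.orderIsoMapComap f).strictMono) ?_
  simp

lemma moduleLength_eq_of_equiv {R M M' : Type*} [CommRing R] [AddCommGroup M] [Module R M]
    [AddCommGroup M'] [Module R M'] (e : M ≃ₗ[R] M') :
    moduleLength R M = moduleLength R M' :=
  le_antisymm (moduleLength_le_of_equiv e) (moduleLength_le_of_equiv e.symm)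

/-- Let `R` be a commutative Noetherian local ring, `M` a finitely generated `R`-module, `N` a
submodule of `M`, `q` an ideal of `R`, and `x ∈ q` a nonzerodivisor on `M/N`.  If `ℓ(N/qN)` is
finite, then `ℓ((N + xM)/(qN + xM)) = ℓ(N/qN)`. -/
theorem length_sup_quotient_eq_length_quotient
    {R : Type*} [CommRing R] [IsNoetherianRing R] [IsLocalRing R]
    (M : Type*) [AddCommGroup M] [Module R M] [Module.Finite R M]
    (N : Submodule R M) (q : Ideal R) (x : R) (hx : x ∈ q)
    (hreg : ∀ a : M, x • a ∈ N → a ∈ N)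
    (hfin : moduleLength R (N ⧸ (q • ⊤ : Submodule R N)) ≠ ⊤) :
    moduleLength R
        ((N ⊔ x • ⊤ : Submodule R M) ⧸
          Submodule.comap (N ⊔ x • ⊤ : Submodule R M).subtype (q • N ⊔ x • ⊤)) =
      moduleLength R (N ⧸ (q • ⊤ : Submodule R N)) := by
  set P : Submodule R M := N ⊔ x • ⊤ with hP
  set Q : Submodule R P := Submodule.comap P.subtype (q • N ⊔ x • ⊤) with hQ
  -- the natural map N → P ⧸ Q
  let f : N →ₗ[R] P ⧸ Q := Q.mkQ ∘ₗ Submodule.inclusion (le_sup_left : N ≤ P)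
  have hmemx : ∀ z : M, z ∈ (x • ⊤ : Submodule R M) ↔ ∃ m : M, x • m = z := by
    intro z
    constructor
    · rintro hz
      obtain ⟨m, -, hm⟩ := Set.mem_smul_set.mp hz
      exact ⟨m, hm⟩
    · rintro ⟨m, rfl⟩
      exact Submodule.smul_mem_pointwise_smul m x ⊤ trivial
  have hsurj : Function.Surjective f := by
    rintro y
    obtain ⟨⟨p, hp⟩, rfl⟩ := Submodule.mkQ_surjective Q y
    obtain ⟨n, hn, z, hz, rfl⟩ := Submodule.mem_sup.mp hp
    refine ⟨⟨n, hn⟩, ?_⟩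
    have : (⟨n + z, hp⟩ : P) - ⟨n, Submodule.mem_sup_left hn⟩ ∈ Q := by
      simp only [hQ, Submodule.mem_comap]
      have : ((⟨n + z, hp⟩ : P) - ⟨n, Submodule.mem_sup_left hn⟩ : P) = (⟨z, Submodule.mem_sup_right hz⟩ : P) := by
        ext; simp
      rw [this]
      exact Submodule.mem_sup_right hz
    simpa [f] using (Submodule.Quotient.eq Q).mpr (by have h := Q.neg_mem this; rw [neg_sub] at h; exact h)
  have hker : LinearMap.ker f = (q • ⊤ : Submodule R N) := by
    have hmap : Submodule.map N.subtype (q • ⊤ : Submodule R N) = q • N := by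
      rw [Submodule.map_smul'', Submodule.map_top, Submodule.range_subtype]
    ext ⟨n, hn⟩
    simp only [LinearMap.mem_ker, f, LinearMap.comp_apply, Submodule.mkQ_apply,
      Submodule.Quotient.mk_eq_zero, hQ, Submodule.mem_comap]
    have hcoe : (P.subtype (Submodule.inclusion (le_sup_left : N ≤ P) ⟨n, hn⟩)) = n := rfl
    rw [hcoe]
    constructor
    · intro h
      obtain ⟨k, hk, z, hz, hkz⟩ := Submodule.mem_sup.mp h
      obtain ⟨m, rfl⟩ := (hmemx z).mp hz
      have hkN : k ∈ N := Submodule.smul_le.mpr (fun r _ a ha => N.smul_mem r ha) hk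
      have hxmN : x • m ∈ N := by
        have : x • m = n - k := by rw [← hkz]; abel
        rw [this]; exact N.sub_mem hn hkN
      have hmN : m ∈ N := hreg m hxmN
      have hnq : n ∈ q • N := by
        rw [← hkz]
        exact (q • N).add_mem hk (Submodule.smul_mem_smul hx hmN)
      -- transfer to q • ⊤ in Submodule R N
      have := hmap ▸ hnq
      obtain ⟨⟨a, haN⟩, ha, haa⟩ := Submodule.mem_map.mp this
      have : (⟨n, hn⟩ : N) = ⟨a, haN⟩ := Subtype.ext (by simpa using haa.symm)
      rw [this]; exact ha
    · intro h
      have : n ∈ q • N := hmap ▸ Submodule.mem_map_of_mem h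
      exact Submodule.mem_sup_left this
  have e : (N ⧸ (q • ⊤ : Submodule R N)) ≃ₗ[R] P ⧸ Q :=
    (Submodule.quotEquivOfEq _ _ hker.symm).trans (f.quotKerEquivOfSurjective hsurj)
  exact (moduleLength_eq_of_equiv e).symm
end

section
/- Let (R, m) be a commutative Noetherian local ring and M a finitely generated R-module of dimension at most one. Then for any submodule N of M and any element x ∈ m, μ(N) ≤ ℓ(M/xM). -/
open Pointwise

namespace ThmA

variable {R : Type*} [CommRing R]

@[simp] lemma DistribMulAction.toLinearMap_apply {M : Type*} [AddCommGroup M] [Module R M]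
    (a : R) (m : M) : DistribMulAction.toLinearMap R M a m = a • m := rfl

section Length

variable {M M₂ : Type*} [AddCommGroup M] [Module R M] [AddCommGroup M₂] [Module R M₂]

lemma length_le_of_strictMono (f : Submodule R M → Submodule R M₂) (hf : StrictMono f) :
    moduleLength R M ≤ moduleLength R M₂ :=
  iSup_le fun p => le_iSup_of_le (p.map f hf) (by simp [moduleLength])

lemma length_congr (e : M ≃ₗ[R] M₂) : moduleLength R M = moduleLength R M₂ := by
  refine le_antisymm (length_le_of_strictMono _ (Submodule.orderIsoMapComap e).strictMono)
    (length_le_of_strictMono _ (Submodule.orderIsoMapComap e).symm.strictMono)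

lemma length_le_of_injective (f : M →ₗ[R] M₂) (hf : Function.Injective f) :
    moduleLength R M ≤ moduleLength R M₂ :=
  length_le_of_strictMono _ (Submodule.map_strictMono_of_injective hf)

lemma length_le_of_surjective (f : M →ₗ[R] M₂) (hf : Function.Surjective f) :
    moduleLength R M₂ ≤ moduleLength R M :=
  length_le_of_strictMono _ (Monotone.strictMono_of_injective
    (fun _ _ h => Submodule.comap_mono h) (Submodule.comap_injective_of_surjective hf))

lemma length_submodule_le (A : Submodule R M) : moduleLength R A ≤ moduleLength R M :=
  length_le_of_injective A.subtype A.injective_subtype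

lemma length_submodule_mono {A B : Submodule R M} (h : A ≤ B) :
    moduleLength R A ≤ moduleLength R B :=
  length_le_of_injective (Submodule.inclusion h) (Submodule.inclusion_injective h)

lemma one_le_length_of_nontrivial [Nontrivial M] : 1 ≤ moduleLength R M := by
  have : (⊥ : Submodule R M) < ⊤ := bot_lt_top
  exact le_iSup_of_le ⟨1, ![⊥, ⊤], fun i => by fin_cases i <;> simpa⟩ (by simp)

/-- Superadditivity. -/
lemma length_sup_add_quot_le (A : Submodule R M) :
    moduleLength R A + moduleLength R (M ⧸ A) ≤ moduleLength R M := by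
  refine ENat.iSup_add_iSup_le fun p q => ?_
  -- pad p so that its last term is ⊤, q so that its head is ⊥
  obtain ⟨p', hp'len, hp'last⟩ : ∃ p' : LTSeries (Submodule R A),
      p.length ≤ p'.length ∧ p'.last = ⊤ := by
    by_cases h : p.last = ⊤
    · exact ⟨p, le_rfl, h⟩
    · exact ⟨p.snoc ⊤ (lt_top_iff_ne_top.2 h), by simp, by simp⟩
  obtain ⟨q', hq'len, hq'head⟩ : ∃ q' : LTSeries (Submodule R (M ⧸ A)),
      q.length ≤ q'.length ∧ q'.head = ⊥ := by
    by_cases h : q.head = ⊥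
    · exact ⟨q, le_rfl, h⟩
    · exact ⟨q.cons ⊥ (Ne.bot_lt h), by simp, by simp⟩
  set P := p'.map (Submodule.map A.subtype)
    (Submodule.map_strictMono_of_injective A.injective_subtype) with hP
  set Q := q'.map (Submodule.comap A.mkQ)
    (Monotone.strictMono_of_injective (fun _ _ h => Submodule.comap_mono h)
      (Submodule.comap_injective_of_surjective A.mkQ_surjective)) with hQ
  have hconn : P.last = Q.head := by
    rw [hP, hQ, LTSeries.last_map, LTSeries.head_map, hp'last, hq'head,
      Submodule.comap_bot, Submodule.ker_mkQ, Submodule.map_subtype_top]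
  refine le_trans ?_ (le_iSup_of_le (P.smash Q hconn) le_rfl)
  have : (P.smash Q hconn).length = p'.length + q'.length := rfl
  rw [this]
  push_cast
  exact add_le_add (by exact_mod_cast hp'len) (by exact_mod_cast hq'len)

lemma height_le_length (A : Submodule R M) : Order.height A ≤ moduleLength R M :=
  Order.height_le fun p _ => le_iSup_of_le p le_rfl

/-- Subadditivity. -/
lemma length_le_sup_add_quot (A : Submodule R M) :
    moduleLength R M ≤ moduleLength R A + moduleLength R (M ⧸ A) := by
  refine iSup_le fun r => ?_
  set F : Fin (r.length + 1) → Submodule R A := fun i => Submodule.comap A.subtype (r i) with hF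
  set G : Fin (r.length + 1) → Submodule R (M ⧸ A) := fun i => Submodule.map A.mkQ (r i) with hG
  have key : ∀ i : ℕ, ∀ h : i ≤ r.length,
      (i : ℕ∞) ≤ Order.height (F ⟨i, by omega⟩) + Order.height (G ⟨i, by omega⟩) := by
    intro i
    induction i with
    | zero => intro _; simp
    | succ i ih =>
      intro h
      have hi := ih (by omega)
      have hstep : F ⟨i, by omega⟩ < F ⟨i + 1, by omega⟩ ∨
          G ⟨i, by omega⟩ < G ⟨i + 1, by omega⟩ := by
        have hlt : r ⟨i, by omega⟩ < r ⟨i + 1, by omega⟩ := r.step ⟨i, by omega⟩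
        by_contra hcon
        push_neg at hcon
        obtain ⟨h1, h2⟩ := hcon
        have hFle : F ⟨i, by omega⟩ ≤ F ⟨i+1, by omega⟩ := Submodule.comap_mono hlt.le
        have hGle : G ⟨i, by omega⟩ ≤ G ⟨i+1, by omega⟩ := Submodule.map_mono hlt.le
        have hFeq : F ⟨i, by omega⟩ = F ⟨i+1, by omega⟩ := hFle.lt_or_eq.resolve_left h1
        have hGeq : G ⟨i, by omega⟩ = G ⟨i+1, by omega⟩ := hGle.lt_or_eq.resolve_left h2
        -- conclude r i = r (i+1), contradiction
        have h1' := congrArg (Submodule.map A.subtype) hFeq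
        simp only [hF, Submodule.map_comap_subtype] at h1'
        have h2' := congrArg (Submodule.comap A.mkQ) hGeq
        simp only [hG, Submodule.comap_map_mkQ] at h2'
        have hinf : r ⟨i+1, by omega⟩ ⊓ A ≤ r ⟨i, by omega⟩ ⊓ A := by
          rw [inf_comm _ A, inf_comm _ A]; exact h1'.ge
        have hsup : r ⟨i+1, by omega⟩ ⊔ A ≤ r ⟨i, by omega⟩ ⊔ A := by
          rw [sup_comm _ A, sup_comm _ A]; exact h2'.ge
        exact absurd (eq_of_le_of_inf_le_of_sup_le hlt.le hinf hsup) hlt.ne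
      have hFmono : Order.height (F ⟨i, by omega⟩) ≤ Order.height (F ⟨i+1, by omega⟩) :=
        Order.height_mono (Submodule.comap_mono (r.strictMono (Fin.mk_lt_mk.2 (by omega))).le)
      have hGmono : Order.height (G ⟨i, by omega⟩) ≤ Order.height (G ⟨i+1, by omega⟩) :=
        Order.height_mono (Submodule.map_mono (r.strictMono (Fin.mk_lt_mk.2 (by omega))).le)
      push_cast
      rcases hstep with hs | hs
      · rcases eq_or_ne (Order.height (F ⟨i, by omega⟩)) ⊤ with htop | htop
        · have : Order.height (F ⟨i+1, by omega⟩) = ⊤ := top_le_iff.1 (htop ▸ hFmono)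
          rw [this]
          simp [top_add]
        · have : Order.height (F ⟨i, by omega⟩) + 1 ≤ Order.height (F ⟨i+1, by omega⟩) :=
            (ENat.add_one_le_iff htop).2 (Order.height_strictMono hs (lt_top_iff_ne_top.2 htop))
          calc (i : ℕ∞) + 1 ≤ (Order.height (F ⟨i, by omega⟩) + Order.height (G ⟨i, by omega⟩)) + 1 :=
                add_le_add_left hi _
            _ = (Order.height (F ⟨i, by omega⟩) + 1) + Order.height (G ⟨i, by omega⟩) := by ring
            _ ≤ _ := add_le_add this hGmono
      · rcases eq_or_ne (Order.height (G ⟨i, by omega⟩)) ⊤ with htop | htop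
        · have : Order.height (G ⟨i+1, by omega⟩) = ⊤ := top_le_iff.1 (htop ▸ hGmono)
          rw [this]
          simp [top_add]
        · have : Order.height (G ⟨i, by omega⟩) + 1 ≤ Order.height (G ⟨i+1, by omega⟩) :=
            (ENat.add_one_le_iff htop).2 (Order.height_strictMono hs (lt_top_iff_ne_top.2 htop))
          calc (i : ℕ∞) + 1 ≤ (Order.height (F ⟨i, by omega⟩) + Order.height (G ⟨i, by omega⟩)) + 1 :=
                add_le_add_left hi _
            _ = Order.height (F ⟨i, by omega⟩) + (Order.height (G ⟨i, by omega⟩) + 1) := by ring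
            _ ≤ _ := add_le_add hFmono this
  have := key r.length le_rfl
  exact this.trans (add_le_add (height_le_length _) (height_le_length _))

end Length

section Finiteness

variable {M M₂ : Type*} [AddCommGroup M] [Module R M] [AddCommGroup M₂] [Module R M₂]

lemma length_eq_zero_of_subsingleton [Subsingleton M] : moduleLength R M = 0 := by
  refine le_antisymm (iSup_le fun p => ?_) zero_le
  have : Subsingleton (Submodule R M) :=
    ⟨fun a b => by
      ext m
      simp [Subsingleton.elim m 0]⟩
  rcases Nat.eq_zero_or_pos p.length with h | h
  · simp [h]
  · have hs := p.step ⟨0, h⟩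
    have he : p.toFun (⟨0, h⟩ : Fin p.length).castSucc = p.toFun (⟨0, h⟩ : Fin p.length).succ :=
      Subsingleton.elim _ _
    rw [he] at hs
    exact absurd hs (lt_irrefl (p.toFun (⟨0, h⟩ : Fin p.length).succ))

lemma length_le_one_of_simple (h : IsSimpleModule R M) : moduleLength R M ≤ 1 := by
  refine iSup_le fun p => ?_
  by_contra hcon
  push_neg at hcon
  have h2 : 2 ≤ p.length := by exact_mod_cast Order.add_one_le_of_lt hcon
  have s0 : p ⟨0, by omega⟩ < p ⟨1, by omega⟩ := p.step ⟨0, by omega⟩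
  have s1 : p ⟨1, by omega⟩ < p ⟨2, by omega⟩ := p.step ⟨1, by omega⟩
  rcases h.1.2 (p ⟨1, by omega⟩) with h1 | h1
  · exact absurd (h1 ▸ s0) (by simp)
  · exact absurd (h1 ▸ s1) (by simp [lt_top_iff_ne_top.symm.symm, not_top_lt])

lemma length_lt_top_of_isFiniteLength (h : IsFiniteLength R M) : moduleLength R M < ⊤ := by
  induction h with
  | of_subsingleton => simp [length_eq_zero_of_subsingleton]
  | @of_simple_quotient M _ _ N hsimp hfin ih =>
    refine lt_of_le_of_lt (length_le_sup_add_quot N) ?_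
    have h1 : moduleLength R (M ⧸ N) ≤ 1 := length_le_one_of_simple hsimp
    exact ENat.add_lt_top.2 ⟨lt_of_le_of_lt le_rfl ih, lt_of_le_of_lt h1 (by exact_mod_cast WithTop.coe_lt_top (1:ℕ))⟩

lemma isArtinian_of_length_lt_top (h : moduleLength R M < ⊤) : IsArtinian R M := by
  by_contra hcon
  have hwf : ¬ WellFounded ((· < ·) : Submodule R M → Submodule R M → Prop) := by
    intro hw
    exact hcon ⟨hw⟩
  rw [RelEmbedding.wellFounded_iff_isEmpty, not_isEmpty_iff] at hwf
  obtain ⟨f⟩ := hwf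
  obtain ⟨m, hm⟩ := WithTop.ne_top_iff_exists.1 h.ne
  have : ∀ n : ℕ, (n : ℕ∞) ≤ moduleLength R M := by
    intro n
    refine le_iSup_of_le ⟨n, fun i => f (n - i.1), fun i => ?_⟩ (by simp)
    refine f.map_rel_iff.2 ?_
    have := i.isLt
    simp only [gt_iff_lt, Fin.coe_castSucc, Fin.val_succ]
    omega
  have h1 := this (m + 1)
  rw [← hm] at h1
  have h2 : (m + 1 : ℕ) ≤ m := Nat.cast_le.mp h1
  omega

end Finiteness

section Chi

variable {P : Type*} [AddCommGroup P] [Module R P]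

lemma mem_pointwise_smul_top (x : R) (m : P) :
    m ∈ (x • ⊤ : Submodule R P) ↔ ∃ p : P, x • p = m := by
  rw [← SetLike.mem_coe, Submodule.coe_pointwise_smul]
  constructor
  · rintro ⟨p, -, rfl⟩; exact ⟨p, rfl⟩
  · rintro ⟨p, rfl⟩; exact ⟨p, trivial, rfl⟩

variable [IsNoetherianRing R] [Module.Finite R P]

lemma ker_smul_length_le (x : R)
    (hQ : moduleLength R (P ⧸ (x • ⊤ : Submodule R P)) ≠ ⊤) :
    moduleLength R (LinearMap.ker (DistribMulAction.toLinearMap R P x)) ≤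
      moduleLength R (P ⧸ (x • ⊤ : Submodule R P)) := by
  classical
  set K1 := LinearMap.ker (DistribMulAction.toLinearMap R P x) with hK1def
  -- the increasing chain of kernels of powers of x
  have gmono : Monotone (fun j => LinearMap.ker (DistribMulAction.toLinearMap R P (x ^ j))) := by
    refine monotone_nat_of_le_succ fun j m hm => ?_
    simp only [LinearMap.mem_ker, DistribMulAction.toLinearMap_apply] at hm ⊢
    rw [pow_succ', mul_smul, hm, smul_zero]
  obtain ⟨n0, hst⟩ := monotone_stabilizes_iff_noetherian.mpr inferInstance
    ⟨fun j => LinearMap.ker (DistribMulAction.toLinearMap R P (x ^ j)), gmono⟩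
  set k := n0 + 1 with hkdef
  set T := LinearMap.ker (DistribMulAction.toLinearMap R P (x ^ k)) with hTdef
  have hstab : T = LinearMap.ker (DistribMulAction.toLinearMap R P (x ^ (k + 1))) := by
    have h1 := hst k (Nat.le_succ n0)
    have h2 := hst (k + 1) (by omega)
    exact h1.symm.trans h2
  have hxmem : ∀ m : P, m ∈ T ↔ x ^ k • m = 0 := fun m => by
    simp [hTdef, LinearMap.mem_ker]
  -- T is stable under x
  have hTstable : ∀ t : P, t ∈ T → x • t ∈ T := by
    intro t ht
    rw [hxmem] at ht ⊢
    rw [smul_comm, ht, smul_zero]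
  -- KEY : T ∩ xP = xT
  have KEY : Submodule.comap T.subtype (x • ⊤ : Submodule R P) =
      (x • ⊤ : Submodule R ↥T) := by
    ext ⟨t, ht⟩
    simp only [Submodule.mem_comap, Submodule.coe_subtype, mem_pointwise_smul_top]
    constructor
    · rintro ⟨p, hp⟩
      have hpT : p ∈ T := by
        rw [hstab, LinearMap.mem_ker, DistribMulAction.toLinearMap_apply, pow_succ, mul_smul, hp]
        exact (hxmem t).1 ht
      exact ⟨⟨p, hpT⟩, Subtype.ext hp⟩
    · rintro ⟨⟨p, hpT⟩, hp⟩
      exact ⟨p, congrArg Subtype.val hp⟩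
  -- the embedding T/xT ↪ P/xP
  have hle : (x • ⊤ : Submodule R ↥T) ≤
      LinearMap.ker ((x • ⊤ : Submodule R P).mkQ ∘ₗ T.subtype) := by
    intro m hm
    obtain ⟨t, rfl⟩ := (mem_pointwise_smul_top x m).1 hm
    simp only [LinearMap.mem_ker, LinearMap.comp_apply, Submodule.coe_subtype,
      Submodule.coe_smul_of_tower, Submodule.mkQ_apply, Submodule.Quotient.mk_eq_zero]
    exact (mem_pointwise_smul_top x _).2 ⟨t, rfl⟩
  set e := Submodule.liftQ (x • ⊤ : Submodule R ↥T)
    ((x • ⊤ : Submodule R P).mkQ ∘ₗ T.subtype) hle with hedef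
  have einj : Function.Injective e := by
    rw [← LinearMap.ker_eq_bot]
    refine Submodule.ker_liftQ_eq_bot _ _ _ ?_
    rw [LinearMap.ker_comp, Submodule.ker_mkQ, KEY]
  -- Artinian chain
  have hQart : IsArtinian R (P ⧸ (x • ⊤ : Submodule R P)) :=
    isArtinian_of_length_lt_top (lt_top_iff_ne_top.2 hQ)
  have hTqart : IsArtinian R (↥T ⧸ (x • ⊤ : Submodule R ↥T)) :=
    isArtinian_of_injective e einj
  set W : ℕ → Submodule R P :=
    fun i => Submodule.map (DistribMulAction.toLinearMap R P (x ^ i)) T with hWdef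
  have hW0 : W 0 = T := by
    ext m
    simp [hWdef]
  have hWle : ∀ i, W (i + 1) ≤ W i := by
    rintro i m hm
    obtain ⟨t, ht, rfl⟩ := hm
    exact ⟨x • t, hTstable t ht, by
      simp only [DistribMulAction.toLinearMap_apply]
      rw [← mul_smul, ← pow_succ]⟩
  have hWk : W k = ⊥ := by
    rw [eq_bot_iff]
    rintro m ⟨t, ht, rfl⟩
    simpa using (hxmem t).1 ht
  have STEP : ∀ i, IsArtinian R ↥(W (i + 1)) → IsArtinian R ↥(W i) := by
    intro i hart
    set Y := Submodule.comap (W i).subtype (W (i + 1)) with hYdef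
    have hYart : IsArtinian R ↥Y :=
      isArtinian_of_injective (Submodule.comapSubtypeEquivOfLe (hWle i)).toLinearMap
        (Submodule.comapSubtypeEquivOfLe (hWle i)).injective
    have hmapsTo : ∀ m : P, m ∈ T → (DistribMulAction.toLinearMap R P (x ^ i)) m ∈ W i :=
      fun m hm => ⟨m, hm, rfl⟩
    set φ := ((DistribMulAction.toLinearMap R P (x ^ i)).restrict hmapsTo) with hφdef
    set φq := Y.mkQ ∘ₗ φ with hφqdef
    have hkills : (x • ⊤ : Submodule R ↥T) ≤ LinearMap.ker φq := by
      intro m hm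
      obtain ⟨t, rfl⟩ := (mem_pointwise_smul_top x m).1 hm
      have hval : (φ (x • t) : P) = x ^ (i + 1) • (t : P) := by
        simp only [hφdef, LinearMap.restrict_coe_apply, DistribMulAction.toLinearMap_apply,
          Submodule.coe_smul_of_tower]
        rw [← mul_smul, ← pow_succ]
      have hmem : (φ (x • t) : P) ∈ W (i + 1) := by
        rw [hval]
        exact ⟨(t : P), t.2, by simp⟩
      simp only [LinearMap.mem_ker, hφqdef, LinearMap.comp_apply, Submodule.mkQ_apply,
        Submodule.Quotient.mk_eq_zero, hYdef, Submodule.mem_comap]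
      exact hmem
  -- ψ : T/xT ↠ W i / Y
    set ψ := Submodule.liftQ (x • ⊤ : Submodule R ↥T) φq hkills with hψdef
    have hψsurj : Function.Surjective ψ := by
      intro z
      obtain ⟨w, rfl⟩ := Submodule.mkQ_surjective _ z
      obtain ⟨m, hmW⟩ := w
      obtain ⟨t, ht, rfl⟩ := hmW
      refine ⟨Submodule.Quotient.mk ⟨t, ht⟩, ?_⟩
      simp only [hψdef, Submodule.liftQ_apply, hφqdef, LinearMap.comp_apply]
      congr 1
    have hquot : IsArtinian R (↥(W i) ⧸ Y) := isArtinian_of_surjective _ ψ hψsurj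
    exact (isArtinian_iff_submodule_quotient Y).mpr ⟨hYart, hquot⟩
  have hart : ∀ j, IsArtinian R ↥(W (k - j)) := by
    intro j
    induction j with
    | zero =>
      rw [Nat.sub_zero, hWk]
      infer_instance
    | succ j ih =>
      by_cases hj : j < k
      · have he : k - j = (k - (j + 1)) + 1 := by omega
        rw [he] at ih
        exact STEP _ ih
      · have he : k - (j + 1) = k - j := by omega
        rw [he]
        exact ih
  have hTart : IsArtinian R ↥T := by
    have := hart k
    rwa [Nat.sub_self, hW0] at this
  have hTlen : moduleLength R ↥T < ⊤ :=
    length_lt_top_of_isFiniteLength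
      (isFiniteLength_iff_isNoetherian_isArtinian.mpr ⟨inferInstance, hTart⟩)
  -- now the length bookkeeping
  have hK1T : K1 ≤ T := by
    intro m hm
    rw [hK1def, LinearMap.mem_ker, DistribMulAction.toLinearMap_apply] at hm
    rw [hxmem, hkdef, pow_succ, mul_smul, hm, smul_zero]
  have hTmapsTo : ∀ m : P, m ∈ T → (DistribMulAction.toLinearMap R P x) m ∈ T :=
    fun m hm => hTstable m hm
  set h := (DistribMulAction.toLinearMap R P x).restrict hTmapsTo with hhdef
  have hkerh : LinearMap.ker h = Submodule.comap T.subtype K1 := by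
    ext ⟨t, ht⟩
    simp only [LinearMap.mem_ker, Submodule.mem_comap, hK1def, Submodule.coe_subtype]
    rw [Subtype.ext_iff]
    simp [hhdef, LinearMap.restrict_coe_apply]
  have hrangeh : LinearMap.range h = (x • ⊤ : Submodule R ↥T) := by
    ext z
    simp only [LinearMap.mem_range, mem_pointwise_smul_top]
    constructor
    · rintro ⟨t', ht'⟩
      exact ⟨t', by rw [← ht']; exact (Subtype.ext (by simp [hhdef])).symm⟩
    · rintro ⟨t', ht'⟩
      exact ⟨t', by rw [← ht']; exact Subtype.ext (by simp [hhdef])⟩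
  have s1 : moduleLength R ↥(Submodule.comap T.subtype K1) +
      moduleLength R (↥T ⧸ Submodule.comap T.subtype K1) ≤ moduleLength R ↥T :=
    length_sup_add_quot_le _
  have e1 : moduleLength R ↥(Submodule.comap T.subtype K1) = moduleLength R ↥K1 :=
    length_congr (Submodule.comapSubtypeEquivOfLe hK1T)
  have e2 : moduleLength R (↥T ⧸ Submodule.comap T.subtype K1) =
      moduleLength R ↥(x • ⊤ : Submodule R ↥T) := by
    refine length_congr (((Submodule.quotEquivOfEq _ _ hkerh.symm).trans
      (h.quotKerEquivRange)).trans (LinearEquiv.ofEq _ _ hrangeh))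
  have s2 : moduleLength R ↥T ≤ moduleLength R ↥(x • ⊤ : Submodule R ↥T) +
      moduleLength R (↥T ⧸ (x • ⊤ : Submodule R ↥T)) :=
    length_le_sup_add_quot _
  have s4 : moduleLength R (↥T ⧸ (x • ⊤ : Submodule R ↥T)) ≤
      moduleLength R (P ⧸ (x • ⊤ : Submodule R P)) :=
    length_le_of_injective e einj
  have hxT : moduleLength R ↥(x • ⊤ : Submodule R ↥T) ≠ ⊤ :=
    (lt_of_le_of_lt (length_submodule_le _) hTlen).ne
  have hcomb : moduleLength R ↥K1 + moduleLength R ↥(x • ⊤ : Submodule R ↥T) ≤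
      moduleLength R (↥T ⧸ (x • ⊤ : Submodule R ↥T)) +
        moduleLength R ↥(x • ⊤ : Submodule R ↥T) := by
    calc moduleLength R ↥K1 + moduleLength R ↥(x • ⊤ : Submodule R ↥T)
        = moduleLength R ↥(Submodule.comap T.subtype K1) +
          moduleLength R (↥T ⧸ Submodule.comap T.subtype K1) := by rw [e1, e2]
      _ ≤ moduleLength R ↥T := s1
      _ ≤ moduleLength R ↥(x • ⊤ : Submodule R ↥T) +
          moduleLength R (↥T ⧸ (x • ⊤ : Submodule R ↥T)) := s2
      _ = _ := add_comm _ _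
  exact le_trans ((WithTop.add_le_add_iff_right hxT).1 hcomb) s4

end Chi


section MainIneq

variable [IsNoetherianRing R]
variable {M : Type*} [AddCommGroup M] [Module R M] [Module.Finite R M]

lemma length_quot_smul_le (N : Submodule R M) (x : R)
    (hL : moduleLength R (M ⧸ (x • ⊤ : Submodule R M)) ≠ ⊤) :
    moduleLength R (↥N ⧸ (x • ⊤ : Submodule R ↥N)) ≤
      moduleLength R (M ⧸ (x • ⊤ : Submodule R M)) := by
  classical
  set xM : Submodule R M := x • ⊤ with hxMdef
  set xN : Submodule R ↥N := x • ⊤ with hxNdef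
  set C : Submodule R ↥N := Submodule.comap N.subtype xM with hCdef
  have h0 : xN ≤ C := by
    intro m hm
    obtain ⟨n, rfl⟩ := (mem_pointwise_smul_top x m).1 hm
    simp only [hCdef, Submodule.mem_comap, Submodule.coe_subtype, Submodule.coe_smul_of_tower]
    exact (mem_pointwise_smul_top x _).2 ⟨(n : M), rfl⟩
  set E : Submodule R M := xM ⊔ N with hEdef
  -- ℓ(M/E) is finite and bounded by L
  have hME_le : moduleLength R (M ⧸ E) ≤ moduleLength R (M ⧸ xM) := by
    refine length_le_of_surjective (Submodule.mapQ xM E LinearMap.id le_sup_left) ?_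
    intro z
    obtain ⟨m, rfl⟩ := Submodule.mkQ_surjective _ z
    exact ⟨Submodule.mkQ _ m, by simp [Submodule.mapQ_apply]⟩
  have hME : moduleLength R (M ⧸ E) ≠ ⊤ :=
    fun htop => hL (top_le_iff.1 (htop ▸ hME_le))
  -- step 1 : ℓ(N/xN) ≤ ℓ(C/xN) + ℓ(N/C)
  have u1 : moduleLength R (↥N ⧸ xN) ≤
      moduleLength R ↥(Submodule.map xN.mkQ C) + moduleLength R (↥N ⧸ C) := by
    refine (length_le_sup_add_quot (Submodule.map xN.mkQ C)).trans ?_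
    refine add_le_add le_rfl (le_of_eq (length_congr ?_))
    exact Submodule.quotientQuotientEquivQuotient xN C h0
  -- identify ℓ(N/C) with ℓ(S), S the image of N in M/xM
  set f₁ : ↥N →ₗ[R] M ⧸ xM := xM.mkQ ∘ₗ N.subtype with hf₁def
  have hkerf₁ : LinearMap.ker f₁ = C := by
    rw [hf₁def, LinearMap.ker_comp, Submodule.ker_mkQ]
  have hrangef₁ : LinearMap.range f₁ = Submodule.map xM.mkQ N := by
    rw [hf₁def, LinearMap.range_comp, Submodule.range_subtype]
  have u3 : moduleLength R (↥N ⧸ C) = moduleLength R ↥(Submodule.map xM.mkQ N) :=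
    length_congr (((Submodule.quotEquivOfEq _ _ hkerf₁.symm).trans
      f₁.quotKerEquivRange).trans (LinearEquiv.ofEq _ _ hrangef₁))
  -- step 2 : ℓ(S) + ℓ(M/E) ≤ L
  have u4 : moduleLength R ↥(Submodule.map xM.mkQ N) + moduleLength R ((M ⧸ xM) ⧸ Submodule.map xM.mkQ N) ≤
      moduleLength R (M ⧸ xM) := length_sup_add_quot_le _
  have u5 : moduleLength R ((M ⧸ xM) ⧸ Submodule.map xM.mkQ N) = moduleLength R (M ⧸ E) :=
    length_congr (Submodule.quotientQuotientEquivQuotientSup xM N)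
  -- BOUND : ℓ(C/xN) ≤ ℓ(M/E)
  set K : Submodule R M := Submodule.comap (DistribMulAction.toLinearMap R M x) N with hKdef
  have hKmapsTo : ∀ m ∈ K, (DistribMulAction.toLinearMap R M x) m ∈ N := fun m hm => hm
  set hh : ↥K →ₗ[R] ↥N ⧸ xN :=
    xN.mkQ ∘ₗ (DistribMulAction.toLinearMap R M x).restrict hKmapsTo with hhhdef
  have claim1 : Submodule.map xN.mkQ C ≤ LinearMap.range hh := by
    rintro z ⟨c, hc, rfl⟩
    have hcM : (c : M) ∈ xM := hc
    obtain ⟨m, hm⟩ := (mem_pointwise_smul_top x _).1 hcM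
    have hmK : m ∈ K := by
      rw [hKdef, Submodule.mem_comap]
      simp only [DistribMulAction.toLinearMap_apply]
      rw [hm]
      exact c.2
    refine ⟨⟨m, hmK⟩, ?_⟩
    simp only [hhhdef, LinearMap.comp_apply, Submodule.mkQ_apply]
    congr 1
    exact Subtype.ext (by simp [hm])
  -- the kernel comparison
  set P := M ⧸ N with hPdef
  set KxP : Submodule R P := LinearMap.ker (DistribMulAction.toLinearMap R P x) with hKxPdef
  have hcod : ∀ c : ↥K, (N.mkQ ∘ₗ K.subtype) c ∈ KxP := by
    intro c
    simp only [hKxPdef, LinearMap.mem_ker, LinearMap.comp_apply, Submodule.coe_subtype,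
      Submodule.mkQ_apply, DistribMulAction.toLinearMap_apply, ← Submodule.Quotient.mk_smul,
      Submodule.Quotient.mk_eq_zero]
    exact (Submodule.Quotient.mk_eq_zero _).2 c.2
  set ψ : ↥K →ₗ[R] ↥KxP := LinearMap.codRestrict KxP (N.mkQ ∘ₗ K.subtype) hcod with hψdef
  have hψsurj : Function.Surjective ψ := by
    rintro ⟨q, hq⟩
    obtain ⟨m, rfl⟩ := Submodule.mkQ_surjective _ q
    rw [hKxPdef, LinearMap.mem_ker, DistribMulAction.toLinearMap_apply,
      Submodule.mkQ_apply, ← Submodule.Quotient.mk_smul, Submodule.Quotient.mk_eq_zero] at hq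
    exact ⟨⟨m, hq⟩, Subtype.ext rfl⟩
  have hkerψ : LinearMap.ker ψ = Submodule.comap K.subtype N := by
    rw [hψdef, LinearMap.ker_codRestrict, LinearMap.ker_comp, Submodule.ker_mkQ]
  have hker_le : LinearMap.ker ψ ≤ LinearMap.ker hh := by
    rw [hkerψ]
    intro c hc
    rw [Submodule.mem_comap] at hc
    simp only [hhhdef, LinearMap.mem_ker, LinearMap.comp_apply, Submodule.mkQ_apply,
      Submodule.Quotient.mk_eq_zero]
    exact (mem_pointwise_smul_top x _).2 ⟨⟨(c : M), hc⟩, Subtype.ext (by simp)⟩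
  have b1 : moduleLength R ↥(Submodule.map xN.mkQ C) ≤ moduleLength R (↥K ⧸ LinearMap.ker hh) :=
    (length_submodule_mono claim1).trans (le_of_eq (length_congr hh.quotKerEquivRange).symm)
  have b2 : moduleLength R (↥K ⧸ LinearMap.ker hh) ≤ moduleLength R ↥KxP := by
    refine le_trans (length_le_of_surjective
      (Submodule.mapQ (LinearMap.ker ψ) (LinearMap.ker hh) LinearMap.id hker_le) ?_) ?_
    · intro z
      obtain ⟨m, rfl⟩ := Submodule.mkQ_surjective _ z
      exact ⟨Submodule.mkQ _ m, by simp [Submodule.mapQ_apply]⟩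
    · exact le_of_eq (length_congr (LinearMap.quotKerEquivOfSurjective ψ hψsurj))
  have b4 : moduleLength R (P ⧸ (x • ⊤ : Submodule R P)) = moduleLength R (M ⧸ E) := by
    have hmapE : Submodule.map N.mkQ E = (x • ⊤ : Submodule R P) := by
      ext z
      constructor
      · rintro ⟨m, hm, rfl⟩
        rw [hEdef] at hm
        obtain ⟨a, haM, n, hn, rfl⟩ := Submodule.mem_sup.1 hm
        obtain ⟨a', rfl⟩ := (mem_pointwise_smul_top x a).1 haM
        refine (mem_pointwise_smul_top x _).2 ⟨Submodule.Quotient.mk a', ?_⟩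
        have h1 : Submodule.Quotient.mk (p := N) (x • a' + n) = Submodule.Quotient.mk (x • a') := by
          rw [Submodule.Quotient.eq]
          simpa using hn
        rw [← Submodule.Quotient.mk_smul, Submodule.mkQ_apply, h1]
      · intro hz
        obtain ⟨q, rfl⟩ := (mem_pointwise_smul_top x z).1 hz
        obtain ⟨m, rfl⟩ := Submodule.mkQ_surjective _ q
        refine ⟨x • m, ?_, ?_⟩
        · exact Submodule.mem_sup_left ((mem_pointwise_smul_top x _).2 ⟨m, rfl⟩)
        · simp [← Submodule.Quotient.mk_smul]
    refine length_congr ((Submodule.quotEquivOfEq _ _ hmapE.symm).trans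
      ((Submodule.quotientQuotientEquivQuotientSup N E).trans
        (Submodule.quotEquivOfEq _ _ (by rw [hEdef, sup_comm xM N, ← sup_assoc, sup_idem]))))
  have b3 : moduleLength R ↥KxP ≤ moduleLength R (M ⧸ E) := by
    rw [← b4]
    exact ker_smul_length_le x (fun htop => hME (b4 ▸ htop))
  have BOUND : moduleLength R ↥(Submodule.map xN.mkQ C) ≤ moduleLength R (M ⧸ E) :=
    (b1.trans b2).trans b3
  calc moduleLength R (↥N ⧸ xN)
      ≤ moduleLength R ↥(Submodule.map xN.mkQ C) + moduleLength R (↥N ⧸ C) := u1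
    _ ≤ moduleLength R (M ⧸ E) + moduleLength R ↥(Submodule.map xM.mkQ N) := by
        rw [u3]; exact add_le_add BOUND le_rfl
    _ = moduleLength R ↥(Submodule.map xM.mkQ N) + moduleLength R ((M ⧸ xM) ⧸ Submodule.map xM.mkQ N) := by
        rw [u5, add_comm]
    _ ≤ moduleLength R (M ⧸ xM) := u4

end MainIneq


section Gen

variable [IsNoetherianRing R] [IsLocalRing R]

universe u

lemma gen_aux (n : ℕ) :
    ∀ (P : Type u) [AddCommGroup P] [Module R P] [Module.Finite R P],
      moduleLength R (P ⧸ (IsLocalRing.maximalIdeal R • ⊤ : Submodule R P)) ≤ (n : ℕ∞) →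
      ∃ s : Finset P, Submodule.span R (s : Set P) = ⊤ ∧ s.card ≤ n := by
  have hjac : IsLocalRing.maximalIdeal R ≤ Ideal.jacobson ⊥ :=
    (IsLocalRing.jacobson_eq_maximalIdeal ⊥ bot_ne_top).ge
  induction n with
  | zero =>
    intro P _ _ _ hlen
    classical
    by_cases hsub : (IsLocalRing.maximalIdeal R • ⊤ : Submodule R P) = ⊤
    · refine ⟨∅, ?_, le_rfl⟩
      have hbot : (⊤ : Submodule R P) = ⊥ :=
        Submodule.eq_bot_of_le_smul_of_le_jacobson_bot (IsLocalRing.maximalIdeal R) ⊤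
          (Module.finite_def.1 inferInstance) hsub.ge hjac
      rw [Finset.coe_empty, Submodule.span_empty, hbot]
    · exfalso
      have hnt : Nontrivial (P ⧸ (IsLocalRing.maximalIdeal R • ⊤ : Submodule R P)) :=
        Submodule.Quotient.nontrivial_iff.mpr hsub
      have h1 : (1 : ℕ∞) ≤ moduleLength R (P ⧸ (IsLocalRing.maximalIdeal R • ⊤ : Submodule R P)) :=
        one_le_length_of_nontrivial
      have := h1.trans hlen
      exact absurd (by exact_mod_cast this : (1 : ℕ) ≤ 0) (by omega)
  | succ n ih =>
    intro P _ _ _ hlen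
    classical
    by_cases hsub : (IsLocalRing.maximalIdeal R • ⊤ : Submodule R P) = ⊤
    · refine ⟨∅, ?_, by simp⟩
      have hbot : (⊤ : Submodule R P) = ⊥ :=
        Submodule.eq_bot_of_le_smul_of_le_jacobson_bot (IsLocalRing.maximalIdeal R) ⊤
          (Module.finite_def.1 inferInstance) hsub.ge hjac
      rw [Finset.coe_empty, Submodule.span_empty, hbot]
    · obtain ⟨v, hv⟩ : ∃ v : P, v ∉ (IsLocalRing.maximalIdeal R • ⊤ : Submodule R P) := by
        by_contra hcon
        push_neg at hcon
        exact hsub (eq_top_iff.2 fun m _ => hcon m)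
      set mP : Submodule R P := IsLocalRing.maximalIdeal R • ⊤ with hmPdef
      set B : Submodule R P := mP ⊔ Submodule.span R {v} with hBdef
      have hvB : v ∈ B := Submodule.mem_sup_right (Submodule.mem_span_singleton_self v)
      have hBlen : moduleLength R (P ⧸ B) ≤ (n : ℕ∞) := by
        have hquot := length_sup_add_quot_le (M := P ⧸ mP) (Submodule.map mP.mkQ B)
        have hmem : mP.mkQ v ∈ Submodule.map mP.mkQ B := ⟨v, hvB, rfl⟩
        have hne : (⟨mP.mkQ v, hmem⟩ : ↥(Submodule.map mP.mkQ B)) ≠ 0 := by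
          intro hc
          have : mP.mkQ v = 0 := congrArg Subtype.val hc
          rw [Submodule.mkQ_apply, Submodule.Quotient.mk_eq_zero] at this
          exact hv this
        have hnt : Nontrivial ↥(Submodule.map mP.mkQ B) := nontrivial_of_ne _ _ hne
        have h1 : (1 : ℕ∞) ≤ moduleLength R ↥(Submodule.map mP.mkQ B) :=
          one_le_length_of_nontrivial
        have h2 : moduleLength R ((P ⧸ mP) ⧸ Submodule.map mP.mkQ B) =
            moduleLength R (P ⧸ B) :=
          length_congr (Submodule.quotientQuotientEquivQuotient mP B le_sup_left)
        have h3 : (1 : ℕ∞) + moduleLength R (P ⧸ B) ≤ (n : ℕ∞) + 1 := by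
          calc (1 : ℕ∞) + moduleLength R (P ⧸ B)
              ≤ moduleLength R ↥(Submodule.map mP.mkQ B) +
                moduleLength R ((P ⧸ mP) ⧸ Submodule.map mP.mkQ B) := by
                rw [h2]; exact add_le_add h1 le_rfl
            _ ≤ moduleLength R (P ⧸ mP) := hquot
            _ ≤ ((n + 1 : ℕ) : ℕ∞) := hlen
            _ = (n : ℕ∞) + 1 := by push_cast; ring
        rw [add_comm] at h3
        exact (WithTop.add_le_add_iff_right ENat.one_ne_top).1 h3
      -- pass to the quotient by span {v}
      have hfin' : Module.Finite R (P ⧸ Submodule.span R {v}) :=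
        Module.Finite.of_surjective (Submodule.mkQ _) (Submodule.mkQ_surjective _)
      have hmap : (IsLocalRing.maximalIdeal R • ⊤ :
          Submodule R (P ⧸ Submodule.span R {v})) =
          Submodule.map (Submodule.span R {v}).mkQ mP := by
        rw [hmPdef, Submodule.map_smul'', Submodule.map_top, Submodule.range_mkQ]
      have hlen' : moduleLength R ((P ⧸ Submodule.span R {v}) ⧸
          (IsLocalRing.maximalIdeal R • ⊤ :
            Submodule R (P ⧸ Submodule.span R {v}))) ≤ (n : ℕ∞) := by
        refine le_trans (le_of_eq (length_congr ?_)) hBlen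
        refine ((Submodule.quotEquivOfEq _ _ hmap).trans
          ((Submodule.quotientQuotientEquivQuotientSup (Submodule.span R {v}) mP).trans
            (Submodule.quotEquivOfEq _ _ ?_)))
        rw [hBdef, sup_comm]
      obtain ⟨s', hs'span, hs'card⟩ := ih (P ⧸ Submodule.span R {v}) hlen'
      set g : (P ⧸ Submodule.span R {v}) → P :=
        Function.surjInv (Submodule.mkQ_surjective (Submodule.span R {v})) with hgdef
      refine ⟨insert v (s'.image g), ?_, ?_⟩
      · have hsub' : (s' : Set (P ⧸ Submodule.span R {v})) ⊆
            (Submodule.span R {v}).mkQ '' ((insert v (s'.image g) : Finset P) : Set P) := by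
          intro z hz
          refine ⟨g z, ?_, Function.surjInv_eq _ z⟩
          simp only [Finset.coe_insert, Set.mem_insert_iff, Finset.coe_image, Set.mem_image]
          exact Or.inr ⟨z, hz, rfl⟩
        have hmaptop : Submodule.map (Submodule.span R {v}).mkQ
            (Submodule.span R ((insert v (s'.image g) : Finset P) : Set P)) = ⊤ := by
          rw [Submodule.map_span]
          rw [eq_top_iff, ← hs'span]
          exact Submodule.span_mono hsub'
        have hvmem : v ∈ Submodule.span R ((insert v (s'.image g) : Finset P) : Set P) :=
          Submodule.subset_span (by simp)
        rw [eq_top_iff]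
        intro p _
        have : (Submodule.span R {v}).mkQ p ∈ Submodule.map (Submodule.span R {v}).mkQ
            (Submodule.span R ((insert v (s'.image g) : Finset P) : Set P)) := by
          rw [hmaptop]; trivial
        obtain ⟨a, ha, haeq⟩ := this
        have hdiff : p - a ∈ Submodule.span R {v} := by
          rw [← Submodule.Quotient.eq]
          exact haeq.symm
        have hdiff' : p - a ∈ Submodule.span R ((insert v (s'.image g) : Finset P) : Set P) :=
          Submodule.span_le.2 (by
            intro z hz
            rw [Set.mem_singleton_iff] at hz
            subst hz
            exact hvmem) hdiff
        have := Submodule.add_mem _ ha hdiff'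
        simpa using this
      · calc (insert v (s'.image g)).card ≤ (s'.image g).card + 1 := Finset.card_insert_le _ _
          _ ≤ s'.card + 1 := by
              have := Finset.card_image_le (f := g) (s := s')
              omega
          _ ≤ n + 1 := by omega

end Gen


end ThmA

/-- **Theorem A** (Matsumura).  Let `(R, m)` be a commutative Noetherian local ring and `M` a
finitely generated `R`-module of dimension at most one.  Then for any submodule `N` of `M` and
any `x ∈ m`, `μ(N) ≤ ℓ(M/xM)`: `N` admits a finite generating set whose cardinality is at most
`ℓ(M/xM)` (in `ℕ∞`). -/
theorem generators_bound_of_dim_le_one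
    {R : Type*} [CommRing R] [IsNoetherianRing R] [IsLocalRing R]
    (M : Type*) [AddCommGroup M] [Module R M] [Module.Finite R M]
    (hdim : ringKrullDim (R ⧸ Module.annihilator R M) ≤ 1)
    (N : Submodule R M) (x : R) (hx : x ∈ IsLocalRing.maximalIdeal R) :
    ∃ s : Finset M, Submodule.span R (s : Set M) = N ∧
      (s.card : ℕ∞) ≤ moduleLength R (M ⧸ (x • ⊤ : Submodule R M)) := by
  classical
  by_cases hL : moduleLength R (M ⧸ (x • ⊤ : Submodule R M)) = ⊤
  · obtain ⟨s, hs⟩ := IsNoetherian.noetherian N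
    exact ⟨s, hs, by rw [hL]; exact le_top⟩
  · obtain ⟨n, hn0⟩ := WithTop.ne_top_iff_exists.1 hL
    have hn : (n : ℕ∞) = moduleLength R (M ⧸ (x • ⊤ : Submodule R M)) := by
      exact_mod_cast hn0
    have hNfin : Module.Finite R ↥N := Module.Finite.iff_fg.mpr (IsNoetherian.noetherian N)
    have hxm : (x • ⊤ : Submodule R ↥N) ≤ (IsLocalRing.maximalIdeal R • ⊤ : Submodule R ↥N) := by
      intro m hm
      obtain ⟨nn, rfl⟩ := (ThmA.mem_pointwise_smul_top x m).1 hm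
      exact Submodule.smul_mem_smul hx trivial
    have h1 : moduleLength R (↥N ⧸ (IsLocalRing.maximalIdeal R • ⊤ : Submodule R ↥N)) ≤
        moduleLength R (↥N ⧸ (x • ⊤ : Submodule R ↥N)) := by
      refine ThmA.length_le_of_surjective (Submodule.mapQ _ _ LinearMap.id hxm) ?_
      intro z
      obtain ⟨m, rfl⟩ := Submodule.mkQ_surjective _ z
      exact ⟨Submodule.mkQ _ m, by simp [Submodule.mapQ_apply]⟩
    have h2 := ThmA.length_quot_smul_le N x hL
    have h3 : moduleLength R (↥N ⧸ (IsLocalRing.maximalIdeal R • ⊤ : Submodule R ↥N)) ≤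
        (n : ℕ∞) := by
      rw [hn]
      exact h1.trans h2
    obtain ⟨s, hspan, hcard⟩ := ThmA.gen_aux n ↥N h3
    refine ⟨s.image Subtype.val, ?_, ?_⟩
    · rw [Finset.coe_image, ← Submodule.coe_subtype, ← Submodule.map_span, hspan]
      rw [Submodule.map_top, Submodule.range_subtype]
    · rw [← hn]
      exact Nat.cast_le.2 (le_trans Finset.card_image_le hcard)
end
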